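/- arXiv:1609.06937 — 6 statements merged into one kernel-verified Lean document; each statement's English description precedes it below -/
import Mathlib

section
/- Let d ≥ 1, T > 0, and let μ be a signed Borel measure of finite total variation on [0,T]×ℝ^d such that |μ|({0}×ℝ^d) = 0. Then there exists a unique signed Borel measure ρ of finite total variation on [0,T]×ℝ^d (called the resolvent of μ) satisfying ρ + μ = μ*ρ. -/
open MeasureTheory

/-- Convolution of two signed measures (of automatically finite total variation),
defined via the Jordan decomposition and the convolution of finite positive measures;
it satisfies `(smConv μ ν) B = ∫ ν (B - z) μ(dz)`. -/
noncomputable def smConv {E : Type*} [MeasurableSpace E] [AddCommMonoid E]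
    (μ ν : SignedMeasure E) : SignedMeasure E :=
  ((μ.toJordanDecomposition.posPart.conv ν.toJordanDecomposition.posPart +
      μ.toJordanDecomposition.negPart.conv ν.toJordanDecomposition.negPart).toSignedMeasure) -
  ((μ.toJordanDecomposition.posPart.conv ν.toJordanDecomposition.negPart +
      μ.toJordanDecomposition.negPart.conv ν.toJordanDecomposition.posPart).toSignedMeasure)

/-- Convolution in `M(S)`: convolve on the ambient space and restrict back to `S`. -/
noncomputable def smConvOn {E : Type*} [MeasurableSpace E] [AddCommMonoid E]
    (S : Set E) (μ ν : SignedMeasure E) : SignedMeasure E :=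
  (smConv μ ν).restrict S

/-!
Weight by `e^{-λt}`. Since `|μ|` lives on `t ≥ 0` and has no mass on `t = 0`, dominated
convergence gives `λ` with `∫ e^{-λt} d|μ| < 1`. The weight is multiplicative, so convolution
with `μ` contracts the weighted mass by that factor, while on `[0,T] × ℝ^d` the weight lies
between `e^{-λT}` and `1`. Hence the Neumann series `ρ = -∑_{n ≥ 1} μ^{*n}` converges in total
variation and solves `ρ + μ = μ * ρ`; and the difference `δ` of two solutions satisfies
`δ = μ * δ`, so its weighted mass is at most `∫ e^{-λt} d|μ|` times itself, forcing `δ = 0`.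
-/

open scoped ENNReal

namespace MeasureTheory

variable {α : Type*} [MeasurableSpace α]

namespace Measure

lemma toSignedMeasure_sub_eq_sub_iff {a b c d : Measure α} [IsFiniteMeasure a]
    [IsFiniteMeasure b] [IsFiniteMeasure c] [IsFiniteMeasure d] :
    a.toSignedMeasure - b.toSignedMeasure = c.toSignedMeasure - d.toSignedMeasure ↔
      a + d = c + b := by
  rw [sub_eq_sub_iff_add_eq_add, ← toSignedMeasure_add, ← toSignedMeasure_add,
    toSignedMeasure_eq_toSignedMeasure_iff]

lemma sum_eq_add_sum_succ (m : ℕ → Measure α) : sum m = m 0 + sum fun n => m (n + 1) := by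
  ext s hs
  rw [sum_apply m hs, add_apply, sum_apply _ hs]
  exact tsum_eq_zero_add' ENNReal.summable

lemma lintegral_le_measure_univ {S : Set α} (hS : MeasurableSet S) {g : α → ℝ≥0∞}
    (hg : ∀ z ∈ S, g z ≤ 1) {m : Measure α} (hm : m Sᶜ = 0) :
    ∫⁻ z, g z ∂m ≤ m Set.univ := by
  rw [← lintegral_add_compl _ hS, restrict_eq_zero.mpr hm, lintegral_zero_measure, add_zero]
  calc ∫⁻ z in S, g z ∂m ≤ ∫⁻ _ in S, 1 ∂m := setLIntegral_mono measurable_const hg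
    _ = m S := setLIntegral_one S
    _ ≤ m Set.univ := measure_mono (Set.subset_univ S)

lemma mul_measure_univ_le_lintegral {S : Set α} (hS : MeasurableSet S) {g : α → ℝ≥0∞}
    (hg : Measurable g) {C : ℝ≥0∞} (hC : ∀ z ∈ S, C ≤ g z) {m : Measure α} (hm : m Sᶜ = 0) :
    C * m Set.univ ≤ ∫⁻ z, g z ∂m := by
  calc C * m Set.univ = ∫⁻ _ in S, C ∂m := by
        rw [setLIntegral_const, ← measure_add_measure_compl hS, hm, add_zero]
    _ ≤ ∫⁻ z in S, g z ∂m := setLIntegral_mono hg hC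
    _ ≤ ∫⁻ z, g z ∂m := setLIntegral_le_lintegral S g

lemma eq_zero_of_lintegral_eq_zero {S : Set α} (hS : MeasurableSet S) {g : α → ℝ≥0∞}
    (hg : Measurable g) {C : ℝ≥0∞} (hC0 : C ≠ 0) (hC : ∀ z ∈ S, C ≤ g z) {m : Measure α}
    (hm : m Sᶜ = 0) (h0 : ∫⁻ z, g z ∂m = 0) : m = 0 := by
  have hle := (mul_measure_univ_le_lintegral hS hg hC hm).trans_eq h0
  exact measure_univ_eq_zero.mp ((mul_eq_zero.mp (nonpos_iff_eq_zero.mp hle)).resolve_left hC0)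

lemma isFiniteMeasure_sum_of_tsum_lintegral_ne_top {S : Set α} (hS : MeasurableSet S)
    {g : α → ℝ≥0∞} (hg : Measurable g) {C : ℝ≥0∞} (hC0 : C ≠ 0) (hC : ∀ z ∈ S, C ≤ g z)
    {w : ℕ → Measure α} (hw : ∀ n, w n Sᶜ = 0) (h : ∑' n, ∫⁻ z, g z ∂(w n) ≠ ∞) :
    IsFiniteMeasure (sum w) := by
  have hle : C * sum w Set.univ ≤ ∑' n, ∫⁻ z, g z ∂(w n) := by
    rw [sum_apply _ MeasurableSet.univ, ← ENNReal.tsum_mul_left]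
    exact ENNReal.tsum_le_tsum fun n => mul_measure_univ_le_lintegral hS hg hC (hw n)
  refine ⟨lt_top_iff_ne_top.mpr fun htop => h (top_le_iff.mp ?_)⟩
  rwa [htop, ENNReal.mul_top hC0] at hle

end Measure

namespace SignedMeasure

variable {s : SignedMeasure α} {a b : Measure α} [IsFiniteMeasure a] [IsFiniteMeasure b]

lemma toSignedMeasure_posPart_sub_negPart (s : SignedMeasure α) :
    s.toJordanDecomposition.posPart.toSignedMeasure -
      s.toJordanDecomposition.negPart.toSignedMeasure = s :=
  s.toSignedMeasure_toJordanDecomposition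

lemma posPart_add_eq_negPart_add_of_eq_sub (h : s = a.toSignedMeasure - b.toSignedMeasure) :
    s.toJordanDecomposition.posPart + b = a + s.toJordanDecomposition.negPart :=
  Measure.toSignedMeasure_sub_eq_sub_iff.mp (s.toSignedMeasure_posPart_sub_negPart.trans h)

lemma posPart_le_of_eq_sub (h : s = a.toSignedMeasure - b.toSignedMeasure) :
    s.toJordanDecomposition.posPart ≤ a := by
  obtain ⟨i, hi, hi_pos, -, hpos, -⟩ := s.toJordanDecomposition_spec
  refine Measure.le_iff.mpr fun t ht => ?_
  rw [hpos, toMeasureOfZeroLE_apply _ hi_pos hi ht, ← ENNReal.ofReal_eq_coe_nnreal]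
  refine ENNReal.ofReal_le_of_le_toReal ?_
  calc s (i ∩ t) ≤ a.real (i ∩ t) := by
        rw [h, sub_apply, Measure.toSignedMeasure_apply_measurable (hi.inter ht),
          Measure.toSignedMeasure_apply_measurable (hi.inter ht)]
        exact sub_le_self _ measureReal_nonneg
    _ ≤ a.real t := measureReal_mono Set.inter_subset_right

lemma negPart_le_of_eq_sub (h : s = a.toSignedMeasure - b.toSignedMeasure) :
    s.toJordanDecomposition.negPart ≤ b := by
  have h' : -s = b.toSignedMeasure - a.toSignedMeasure := by rw [h, neg_sub]
  simpa [toJordanDecomposition_neg] using posPart_le_of_eq_sub h'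

lemma totalVariation_le_of_eq_sub (h : s = a.toSignedMeasure - b.toSignedMeasure) :
    s.totalVariation ≤ a + b :=
  add_le_add (posPart_le_of_eq_sub h) (negPart_le_of_eq_sub h)

end SignedMeasure

namespace Measure

variable [AddCommMonoid α] [MeasurableAdd₂ α]

lemma conv_sum (m : Measure α) (f : ℕ → Measure α) [∀ n, SFinite (f n)] :
    m ∗ sum f = sum fun n => m ∗ f n := by
  rw [conv, prod_sum_right, map_sum measurable_add.aemeasurable]
  rfl

lemma lintegral_conv_of_map_add {g : α → ℝ≥0∞} (hg : Measurable g)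
    (hadd : ∀ x y, g (x + y) = g x * g y) (m m' : Measure α) [SFinite m'] :
    ∫⁻ z, g z ∂(m ∗ m') = (∫⁻ z, g z ∂m) * ∫⁻ z, g z ∂m' := by
  simp_rw [lintegral_conv hg, hadd, lintegral_const_mul _ hg, lintegral_mul_const _ hg]

end Measure

end MeasureTheory

open MeasureTheory

section Convolution

variable {α : Type*} [MeasurableSpace α] [AddCommMonoid α]

/-- `smConvOn S μ` acting on pairs `(a, b)` of positive measures that stand for `a - b`. -/
noncomputable def smConvOnPair (S : Set α) (μ : SignedMeasure α) (p : Measure α × Measure α) :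
    Measure α × Measure α :=
  ((μ.toJordanDecomposition.posPart ∗ p.1 + μ.toJordanDecomposition.negPart ∗ p.2).restrict S,
    (μ.toJordanDecomposition.posPart ∗ p.2 + μ.toJordanDecomposition.negPart ∗ p.1).restrict S)

variable (S : Set α) (μ : SignedMeasure α) (p : Measure α × Measure α)

instance [IsFiniteMeasure p.1] [IsFiniteMeasure p.2] :
    IsFiniteMeasure (smConvOnPair S μ p).1 := by
  unfold smConvOnPair; infer_instance

instance [IsFiniteMeasure p.1] [IsFiniteMeasure p.2] :
    IsFiniteMeasure (smConvOnPair S μ p).2 := by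
  unfold smConvOnPair; infer_instance

variable {S} in
lemma smConvOnPair_apply_compl (hS : MeasurableSet S) :
    (smConvOnPair S μ p).1 Sᶜ = 0 ∧ (smConvOnPair S μ p).2 Sᶜ = 0 := by
  simp [smConvOnPair, Measure.restrict_apply hS.compl]

variable [MeasurableAdd₂ α]

lemma smConv_toSignedMeasure_sub (a b : Measure α) [IsFiniteMeasure a] [IsFiniteMeasure b] :
    smConv μ (a.toSignedMeasure - b.toSignedMeasure) =
      (μ.toJordanDecomposition.posPart ∗ a +
        μ.toJordanDecomposition.negPart ∗ b).toSignedMeasure -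
      (μ.toJordanDecomposition.posPart ∗ b +
        μ.toJordanDecomposition.negPart ∗ a).toSignedMeasure := by
  set ν := a.toSignedMeasure - b.toSignedMeasure
  set P := μ.toJordanDecomposition.posPart
  set N := μ.toJordanDecomposition.negPart
  have key : ν.toJordanDecomposition.posPart + b = a + ν.toJordanDecomposition.negPart :=
    SignedMeasure.posPart_add_eq_negPart_add_of_eq_sub rfl
  have key' : ν.toJordanDecomposition.negPart + a = b + ν.toJordanDecomposition.posPart := by
    rw [add_comm, ← key, add_comm]
  rw [smConv, Measure.toSignedMeasure_sub_eq_sub_iff]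
  calc _ = P ∗ (ν.toJordanDecomposition.posPart + b) +
        N ∗ (ν.toJordanDecomposition.negPart + a) := by
        rw [Measure.conv_add, Measure.conv_add]; abel
    _ = P ∗ (a + ν.toJordanDecomposition.negPart) +
        N ∗ (b + ν.toJordanDecomposition.posPart) := by
        rw [key, key']
    _ = _ := by rw [Measure.conv_add, Measure.conv_add]; abel

variable {S}

lemma smConvOn_toSignedMeasure_sub (hS : MeasurableSet S) (a b : Measure α) [IsFiniteMeasure a]
    [IsFiniteMeasure b] :
    smConvOn S μ (a.toSignedMeasure - b.toSignedMeasure) =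
      (smConvOnPair S μ (a, b)).1.toSignedMeasure -
        (smConvOnPair S μ (a, b)).2.toSignedMeasure := by
  rw [smConvOn, smConv_toSignedMeasure_sub, VectorMeasure.restrict_sub,
    VectorMeasure.restrict_toSignedMeasure hS, VectorMeasure.restrict_toSignedMeasure hS]
  rfl

lemma smConvOnPair_add (q : Measure α × Measure α) [SFinite p.1] [SFinite p.2] [SFinite q.1]
    [SFinite q.2] : smConvOnPair S μ (p + q) = smConvOnPair S μ p + smConvOnPair S μ q := by
  simp only [smConvOnPair, Prod.fst_add, Prod.snd_add, Measure.conv_add, Prod.mk_add_mk,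
    ← Measure.restrict_add]
  congr 2 <;> abel

lemma smConvOnPair_sum (u v : ℕ → Measure α) [∀ n, SFinite (u n)] [∀ n, SFinite (v n)]
    (hS : MeasurableSet S) :
    smConvOnPair S μ (Measure.sum u, Measure.sum v) =
      (Measure.sum fun n => (smConvOnPair S μ (u n, v n)).1,
        Measure.sum fun n => (smConvOnPair S μ (u n, v n)).2) := by
  simp only [smConvOnPair, Measure.conv_sum, Measure.sum_add_sum, Measure.restrict_sum _ hS]

lemma smConvOn_add (hS : MeasurableSet S) (x y : SignedMeasure α) :
    smConvOn S μ (x + y) = smConvOn S μ x + smConvOn S μ y := by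
  rw [← x.toSignedMeasure_posPart_sub_negPart, ← y.toSignedMeasure_posPart_sub_negPart]
  set a := x.toJordanDecomposition.posPart
  set b := x.toJordanDecomposition.negPart
  set c := y.toJordanDecomposition.posPart
  set d := y.toJordanDecomposition.negPart
  have hsum : a.toSignedMeasure - b.toSignedMeasure + (c.toSignedMeasure - d.toSignedMeasure) =
      (a + c).toSignedMeasure - (b + d).toSignedMeasure := by
    rw [Measure.toSignedMeasure_add, Measure.toSignedMeasure_add]; abel
  have hpair : smConvOnPair S μ (a + c, b + d) =
      smConvOnPair S μ (a, b) + smConvOnPair S μ (c, d) :=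
    smConvOnPair_add μ (a, b) (c, d)
  rw [hsum, smConvOn_toSignedMeasure_sub μ hS, smConvOn_toSignedMeasure_sub μ hS,
    smConvOn_toSignedMeasure_sub μ hS, sub_add_sub_comm, ← Measure.toSignedMeasure_add,
    ← Measure.toSignedMeasure_add, Measure.toSignedMeasure_sub_eq_sub_iff, hpair, Prod.fst_add,
    Prod.snd_add]

lemma smConvOn_sub (hS : MeasurableSet S) (x y : SignedMeasure α) :
    smConvOn S μ (x - y) = smConvOn S μ x - smConvOn S μ y :=
  (AddMonoidHom.mk' (smConvOn S μ) (smConvOn_add μ hS)).map_sub x y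

end Convolution

section Series

variable {α : Type*} [MeasurableSpace α] [AddCommMonoid α] {S : Set α} (μ : SignedMeasure α)

noncomputable def smConvOnPairSeries (S : Set α) (μ : SignedMeasure α)
    (p : Measure α × Measure α) : Measure α × Measure α :=
  (Measure.sum fun n => ((smConvOnPair S μ)^[n] p).1,
    Measure.sum fun n => ((smConvOnPair S μ)^[n] p).2)

lemma isFiniteMeasure_smConvOnPair_iterate (p : Measure α × Measure α) [IsFiniteMeasure p.1]
    [IsFiniteMeasure p.2] (n : ℕ) :
    IsFiniteMeasure ((smConvOnPair S μ)^[n] p).1 ∧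
      IsFiniteMeasure ((smConvOnPair S μ)^[n] p).2 := by
  induction n generalizing p with
  | zero => exact ⟨‹_›, ‹_›⟩
  | succ n ih => rw [Function.iterate_succ_apply]; exact ih _

lemma smConvOnPair_iterate_apply_compl (hS : MeasurableSet S) {p : Measure α × Measure α}
    (hp : p.1 Sᶜ = 0 ∧ p.2 Sᶜ = 0) (n : ℕ) :
    ((smConvOnPair S μ)^[n] p).1 Sᶜ = 0 ∧ ((smConvOnPair S μ)^[n] p).2 Sᶜ = 0 := by
  cases n with
  | zero => exact hp
  | succ n => rw [Function.iterate_succ_apply']; exact smConvOnPair_apply_compl μ _ hS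

variable [MeasurableAdd₂ α]

lemma smConvOnPairSeries_eq_add (hS : MeasurableSet S) (p : Measure α × Measure α)
    [IsFiniteMeasure p.1] [IsFiniteMeasure p.2] :
    smConvOnPairSeries S μ p = p + smConvOnPair S μ (smConvOnPairSeries S μ p) := by
  have hfin := isFiniteMeasure_smConvOnPair_iterate μ p (S := S)
  have : ∀ n, IsFiniteMeasure ((smConvOnPair S μ)^[n] p).1 := fun n => (hfin n).1
  have : ∀ n, IsFiniteMeasure ((smConvOnPair S μ)^[n] p).2 := fun n => (hfin n).2
  rw [smConvOnPairSeries, smConvOnPair_sum μ _ _ hS]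
  refine Prod.ext ?_ ?_ <;>
  · simp only [Prod.fst_add, Prod.snd_add, Prod.mk.eta]
    rw [Measure.sum_eq_add_sum_succ]
    simp only [Function.iterate_succ_apply', Function.iterate_zero_apply]

end Series

section Resolvent

variable {α : Type*} [MeasurableSpace α] [AddCommMonoid α] [MeasurableAdd₂ α] {S : Set α}
  (μ : SignedMeasure α) {g : α → ℝ≥0∞}

lemma add_eq_smConvOn_of_eq_add (hS : MeasurableSet S) {a b : Measure α} [IsFiniteMeasure a]
    [IsFiniteMeasure b]
    (h : (a, b) = (μ.toJordanDecomposition.negPart, μ.toJordanDecomposition.posPart) +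
      smConvOnPair S μ (a, b)) :
    a.toSignedMeasure - b.toSignedMeasure + μ =
      smConvOn S μ (a.toSignedMeasure - b.toSignedMeasure) := by
  set P := μ.toJordanDecomposition.posPart
  set N := μ.toJordanDecomposition.negPart
  obtain ⟨ha, hb⟩ := Prod.ext_iff.mp h
  simp only [Prod.fst_add, Prod.snd_add] at ha hb
  rw [smConvOn_toSignedMeasure_sub μ hS]
  conv_lhs => rw [← μ.toSignedMeasure_posPart_sub_negPart]
  rw [sub_add_sub_comm, ← Measure.toSignedMeasure_add, ← Measure.toSignedMeasure_add,
    Measure.toSignedMeasure_sub_eq_sub_iff]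
  calc a + P + (smConvOnPair S μ (a, b)).2
      = (N + (smConvOnPair S μ (a, b)).1) + P + (smConvOnPair S μ (a, b)).2 := by rw [← ha]
    _ = (smConvOnPair S μ (a, b)).1 + ((P + (smConvOnPair S μ (a, b)).2) + N) := by abel
    _ = (smConvOnPair S μ (a, b)).1 + (b + N) := by rw [← hb]

lemma lintegral_smConvOnPair_le (hg : Measurable g) (hadd : ∀ x y, g (x + y) = g x * g y)
    (p : Measure α × Measure α) [SFinite p.1] [SFinite p.2] :
    ∫⁻ z, g z ∂(smConvOnPair S μ p).1 + ∫⁻ z, g z ∂(smConvOnPair S μ p).2 ≤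
      (∫⁻ z, g z ∂μ.totalVariation) * (∫⁻ z, g z ∂p.1 + ∫⁻ z, g z ∂p.2) := by
  refine (add_le_add (setLIntegral_le_lintegral S g) (setLIntegral_le_lintegral S g)).trans_eq ?_
  simp only [SignedMeasure.totalVariation, lintegral_add_measure,
    Measure.lintegral_conv_of_map_add hg hadd]
  ring

lemma lintegral_smConvOnPair_iterate_le (hg : Measurable g)
    (hadd : ∀ x y, g (x + y) = g x * g y) (p : Measure α × Measure α) [IsFiniteMeasure p.1]
    [IsFiniteMeasure p.2] (n : ℕ) :
    ∫⁻ z, g z ∂((smConvOnPair S μ)^[n] p).1 + ∫⁻ z, g z ∂((smConvOnPair S μ)^[n] p).2 ≤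
      (∫⁻ z, g z ∂μ.totalVariation) ^ n * (∫⁻ z, g z ∂p.1 + ∫⁻ z, g z ∂p.2) := by
  induction n generalizing p with
  | zero => simp
  | succ n ih =>
    rw [Function.iterate_succ_apply, pow_succ, mul_assoc]
    exact (ih _).trans (by gcongr; exact lintegral_smConvOnPair_le μ hg hadd p)

theorem exists_add_eq_smConvOn (hS : MeasurableSet S) (hg : Measurable g)
    (hadd : ∀ x y, g (x + y) = g x * g y) {C : ℝ≥0∞} (hC0 : C ≠ 0) (hC : ∀ z ∈ S, C ≤ g z)
    (hμS : μ.totalVariation Sᶜ = 0) (hμ : ∫⁻ z, g z ∂μ.totalVariation < 1) :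
    ∃ ρ : SignedMeasure α, ρ.totalVariation Sᶜ = 0 ∧ ρ + μ = smConvOn S μ ρ := by
  set c := ∫⁻ z, g z ∂μ.totalVariation
  set p : Measure α × Measure α :=
    (μ.toJordanDecomposition.negPart, μ.toJordanDecomposition.posPart) with hp_def
  set R := smConvOnPairSeries S μ p
  have hp : p.1 Sᶜ = 0 ∧ p.2 Sᶜ = 0 := by
    simpa [hp_def, SignedMeasure.totalVariation, and_comm] using hμS
  have hp_weight : ∫⁻ z, g z ∂p.1 + ∫⁻ z, g z ∂p.2 = c := by
    rw [add_comm, ← lintegral_add_measure]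
    rfl
  have hsupp := smConvOnPair_iterate_apply_compl μ hS hp
  have hbound (n : ℕ) :
      ∫⁻ z, g z ∂((smConvOnPair S μ)^[n] p).1 + ∫⁻ z, g z ∂((smConvOnPair S μ)^[n] p).2 ≤
        c ^ n * c :=
    (lintegral_smConvOnPair_iterate_le μ hg hadd p n).trans_eq (by rw [hp_weight])
  have hgeom : ∑' n, c ^ n * c ≠ ∞ := by
    rw [ENNReal.tsum_mul_right, ENNReal.tsum_geometric]
    exact ENNReal.mul_ne_top (ENNReal.inv_ne_top.mpr (tsub_pos_of_lt hμ).ne') hμ.ne_top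
  have : IsFiniteMeasure R.1 :=
    Measure.isFiniteMeasure_sum_of_tsum_lintegral_ne_top hS hg hC0 hC (fun n => (hsupp n).1)
      (ne_top_of_le_ne_top hgeom (ENNReal.tsum_le_tsum fun n => le_self_add.trans (hbound n)))
  have : IsFiniteMeasure R.2 :=
    Measure.isFiniteMeasure_sum_of_tsum_lintegral_ne_top hS hg hC0 hC (fun n => (hsupp n).2)
      (ne_top_of_le_ne_top hgeom (ENNReal.tsum_le_tsum fun n => le_add_self.trans (hbound n)))
  have hR : R.1 Sᶜ = 0 ∧ R.2 Sᶜ = 0 := by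
    simp only [R, smConvOnPairSeries, Measure.sum_apply _ hS.compl, ENNReal.tsum_eq_zero]
    exact ⟨fun n => (hsupp n).1, fun n => (hsupp n).2⟩
  refine ⟨R.1.toSignedMeasure - R.2.toSignedMeasure, ?_,
    add_eq_smConvOn_of_eq_add μ hS (smConvOnPairSeries_eq_add μ hS p)⟩
  refine nonpos_iff_eq_zero.mp
    ((Measure.le_iff'.mp (SignedMeasure.totalVariation_le_of_eq_sub rfl) Sᶜ).trans_eq ?_)
  rw [Measure.add_apply, hR.1, hR.2, add_zero]

theorem eq_zero_of_eq_smConvOn (hS : MeasurableSet S) (hg : Measurable g)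
    (hadd : ∀ x y, g (x + y) = g x * g y) (hg1 : ∀ z ∈ S, g z ≤ 1) {C : ℝ≥0∞} (hC0 : C ≠ 0)
    (hC : ∀ z ∈ S, C ≤ g z) (hμ : ∫⁻ z, g z ∂μ.totalVariation < 1) {δ : SignedMeasure α}
    (hδ : δ = smConvOn S μ δ) : δ = 0 := by
  set a := δ.toJordanDecomposition.posPart
  set b := δ.toJordanDecomposition.negPart
  set q := smConvOnPair S μ (a, b)
  have hδq : δ = q.1.toSignedMeasure - q.2.toSignedMeasure :=
    hδ.trans <| (congrArg (smConvOn S μ) δ.toSignedMeasure_posPart_sub_negPart.symm).trans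
      (smConvOn_toSignedMeasure_sub μ hS a b)
  have ha := SignedMeasure.posPart_le_of_eq_sub hδq
  have hb := SignedMeasure.negPart_le_of_eq_sub hδq
  have hq := smConvOnPair_apply_compl μ (a, b) hS
  have haS : a Sᶜ = 0 := nonpos_iff_eq_zero.mp ((Measure.le_iff'.mp ha Sᶜ).trans hq.1.le)
  have hbS : b Sᶜ = 0 := nonpos_iff_eq_zero.mp ((Measure.le_iff'.mp hb Sᶜ).trans hq.2.le)
  set t := ∫⁻ z, g z ∂a + ∫⁻ z, g z ∂b
  have ht : t ≤ (∫⁻ z, g z ∂μ.totalVariation) * t :=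
    (add_le_add (lintegral_mono' ha le_rfl) (lintegral_mono' hb le_rfl)).trans
      (lintegral_smConvOnPair_le μ hg hadd (a, b))
  have ht_top : t ≠ ∞ := ENNReal.add_ne_top.mpr
    ⟨ne_top_of_le_ne_top (measure_ne_top a _) (Measure.lintegral_le_measure_univ hS hg1 haS),
      ne_top_of_le_ne_top (measure_ne_top b _) (Measure.lintegral_le_measure_univ hS hg1 hbS)⟩
  have ht0 : t = 0 := by
    by_contra h0
    have hlt := ENNReal.mul_lt_mul_right h0 ht_top hμ
    rw [mul_one, mul_comm] at hlt
    exact (ht.trans_lt hlt).false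
  obtain ⟨hta, htb⟩ := add_eq_zero.mp ht0
  rw [← δ.toSignedMeasure_posPart_sub_negPart, sub_eq_zero,
    Measure.toSignedMeasure_eq_toSignedMeasure_iff]
  exact (Measure.eq_zero_of_lintegral_eq_zero hS hg hC0 hC haS hta).trans
    (Measure.eq_zero_of_lintegral_eq_zero hS hg hC0 hC hbS htb).symm

theorem existsUnique_add_eq_smConvOn (hS : MeasurableSet S) (hg : Measurable g)
    (hadd : ∀ x y, g (x + y) = g x * g y) (hg1 : ∀ z ∈ S, g z ≤ 1) {C : ℝ≥0∞} (hC0 : C ≠ 0)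
    (hC : ∀ z ∈ S, C ≤ g z) (hμS : μ.totalVariation Sᶜ = 0)
    (hμ : ∫⁻ z, g z ∂μ.totalVariation < 1) :
    ∃! ρ : SignedMeasure α, ρ.totalVariation Sᶜ = 0 ∧ ρ + μ = smConvOn S μ ρ := by
  obtain ⟨ρ, hρS, hρ⟩ := exists_add_eq_smConvOn μ hS hg hadd hC0 hC hμS hμ
  refine ⟨ρ, ⟨hρS, hρ⟩, fun ρ' ⟨_, hρ'⟩ => sub_eq_zero.mp ?_⟩
  refine eq_zero_of_eq_smConvOn μ hS hg hadd hg1 hC0 hC hμ ?_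
  rw [smConvOn_sub μ hS, ← hρ, ← hρ']
  abel

end Resolvent

open Filter Topology

lemma tendsto_lintegral_ofReal_exp_neg_mul {β : Type*} [MeasurableSpace β] (m : Measure β)
    [IsFiniteMeasure m] {f : β → ℝ} (hf : Measurable f) (hpos : ∀ᵐ z ∂m, 0 < f z) :
    Tendsto (fun n : ℕ => ∫⁻ z, ENNReal.ofReal (Real.exp (-(n * f z))) ∂m) atTop (𝓝 0) := by
  have hlim : Tendsto (fun n : ℕ => ∫⁻ z, ENNReal.ofReal (Real.exp (-(n * f z))) ∂m) atTop
      (𝓝 (∫⁻ _, 0 ∂m)) := by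
    refine tendsto_lintegral_of_dominated_convergence (fun _ => 1) (fun n => by fun_prop)
      (fun n => ?_) (by simp) ?_ <;> filter_upwards [hpos] with z hz
    · exact ENNReal.ofReal_le_one.mpr (Real.exp_le_one_iff.mpr
        (neg_nonpos.mpr (mul_nonneg n.cast_nonneg hz.le)))
    · have h := Real.tendsto_exp_atBot.comp
        (tendsto_neg_atTop_atBot.comp (tendsto_natCast_atTop_atTop.atTop_mul_const hz))
      simpa using ENNReal.tendsto_ofReal h
  rwa [lintegral_zero] at hlim

lemma ofReal_exp_neg_mul_add (l : ℝ) {E : Type*} [Add E] (x y : ℝ × E) :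
    ENNReal.ofReal (Real.exp (-(l * (x + y).1))) =
      ENNReal.ofReal (Real.exp (-(l * x.1))) * ENNReal.ofReal (Real.exp (-(l * y.1))) := by
  rw [← ENNReal.ofReal_mul (Real.exp_pos _).le, ← Real.exp_add, Prod.fst_add, mul_add, neg_add]

theorem stmt1_general (d : ℕ) (T : ℝ)
    (S : Set (ℝ × (Fin d → ℝ))) (hS : S = Set.Icc (0 : ℝ) T ×ˢ (Set.univ : Set (Fin d → ℝ)))
    (μ : SignedMeasure (ℝ × (Fin d → ℝ)))
    (hsupp : μ.totalVariation Sᶜ = 0)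
    (hzero : μ.totalVariation (({0} : Set ℝ) ×ˢ (Set.univ : Set (Fin d → ℝ))) = 0) :
    ∃! ρ : SignedMeasure (ℝ × (Fin d → ℝ)),
      ρ.totalVariation Sᶜ = 0 ∧ ρ + μ = smConvOn S μ ρ := by
  subst hS
  have hpos : ∀ᵐ z ∂μ.totalVariation, 0 < z.1 := by
    refine measure_mono_null (fun z hz => ?_) (measure_union_null hsupp hzero)
    by_cases h0 : z.1 = 0
    · exact Or.inr ⟨h0, trivial⟩
    · exact Or.inl fun hzS => h0 (le_antisymm (not_lt.mp hz) hzS.1.1)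
  obtain ⟨n, hn⟩ := ((tendsto_lintegral_ofReal_exp_neg_mul _ measurable_fst hpos
    ).eventually_lt_const zero_lt_one).exists
  refine existsUnique_add_eq_smConvOn μ (measurableSet_Icc.prod .univ) (by fun_prop)
    (ofReal_exp_neg_mul_add n) (fun z hz => ?_) (C := ENNReal.ofReal (Real.exp (-(n * T))))
    (ENNReal.ofReal_pos.mpr (Real.exp_pos _)).ne' (fun z hz => ?_) hsupp hn
  · exact ENNReal.ofReal_le_one.mpr (Real.exp_le_one_iff.mpr
      (neg_nonpos.mpr (mul_nonneg n.cast_nonneg hz.1.1)))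
  · exact ENNReal.ofReal_le_ofReal (Real.exp_le_exp.mpr
      (neg_le_neg (mul_le_mul_of_nonneg_left hz.1.2 n.cast_nonneg)))

/-- if `μ ∈ M([0,T]×ℝ^d)` puts no mass on `{0}×ℝ^d`, there exists a unique
`ρ ∈ M([0,T]×ℝ^d)` (the resolvent of `μ`) with `ρ + μ = μ*ρ`. -/
theorem stmt1 (d : ℕ) (hd : 1 ≤ d) (T : ℝ) (hT : 0 < T)
    (S : Set (ℝ × (Fin d → ℝ))) (hS : S = Set.Icc (0 : ℝ) T ×ˢ (Set.univ : Set (Fin d → ℝ)))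
    (μ : SignedMeasure (ℝ × (Fin d → ℝ)))
    (hsupp : μ.totalVariation Sᶜ = 0)
    (hzero : μ.totalVariation (({0} : Set ℝ) ×ˢ (Set.univ : Set (Fin d → ℝ))) = 0) :
    ∃! ρ : SignedMeasure (ℝ × (Fin d → ℝ)),
      ρ.totalVariation Sᶜ = 0 ∧ ρ + μ = smConvOn S μ ρ :=
  stmt1_general d T S hS μ hsupp hzero
end

section
/- Let d ≥ 1, let ν be a Borel measure on ℝ with ν({0})=0 and ∫_ℝ (1 ∧ z²) ν(dz) < ∞, let b ∈ ℝ, and let g: ℝ₊×ℝ^d → ℝ be measurable. Suppose there exist measurable functions k, K: ℝ₊ → ℝ₊ and constants C₁, C₂ ≥ 0 such that |b + ∫_{{1<|z|≤A}} z ν(dz)| ≤ C₁ K(A) for all A ≥ 1, |b − ∫_{{a<|z|≤1}} z ν(dz)| ≤ C₂ k(a) for all a ∈ (0,1], and ∫_{ℝ₊×ℝ^d} |g(t,x)| ( k(|g(t,x)|^{-1}) 1_{{|g(t,x)|>1}} + K(|g(t,x)|^{-1}) 1_{{0<|g(t,x)|≤1}} ) d(t,x) < ∞. Then ∫_{ℝ₊×ℝ^d}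 | b g(t,x) + ∫_ℝ ( z g(t,x) 1_{{|z g(t,x)|≤1}} − g(t,x) z 1_{{|z|≤1}} ) ν(dz) | d(t,x) < ∞. -/
open MeasureTheory

/-!
Write `U(u) = b u + ∫ (z u 1_{|zu|≤1} - u z 1_{|z|≤1}) ν(dz)` for the integrand. For `u ≠ 0` the
two truncations differ only on an annulus: `|zu| ≤ 1` means `|z| ≤ |u|⁻¹`, so
`U(u) = (b + ∫_{1<|z|≤|u|⁻¹} z ν(dz)) u` when `|u| ≤ 1` and `U(u) = (b - ∫_{|u|⁻¹<|z|≤1} z ν(dz)) u`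
when `|u| > 1`. The two drift bounds, at `A = a = |u|⁻¹`, then dominate `|U(g(t,x))|` pointwise by
a constant multiple of the integrand of the hypothesis on `g`.
-/

/-- Rajput–Rosinski's function `U`, for the truncation `τ(z) = z 1_{|z|≤1}`. -/
noncomputable def truncatedDrift (ν : Measure ℝ) (b u : ℝ) : ℝ :=
  b * u + ∫ z, ((if |z * u| ≤ 1 then z * u else 0) - (if |z| ≤ 1 then u * z else 0)) ∂ν

noncomputable def driftWeight (k K : ℝ → ℝ) (u : ℝ) : ℝ :=
  (if 1 < |u| then k |u|⁻¹ else 0) + (if 0 < |u| ∧ |u| ≤ 1 then K |u|⁻¹ else 0)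

lemma driftWeight_nonneg {k K : ℝ → ℝ} (hk : ∀ x, 0 ≤ k x) (hK : ∀ x, 0 ≤ K x) (u : ℝ) :
    0 ≤ driftWeight k K u :=
  add_nonneg (by split_ifs <;> simp [hk]) (by split_ifs <;> simp [hK])

lemma measurableSet_abs_mem_Ioc (a c : ℝ) : MeasurableSet {z : ℝ | a < |z| ∧ |z| ≤ c} :=
  (measurableSet_lt measurable_const measurable_abs).inter
    (measurableSet_le measurable_abs measurable_const)

lemma ite_abs_le_sub_ite_abs_le_of_one_le {c : ℝ} (hc : 1 ≤ c) (f : ℝ → ℝ) (z : ℝ) :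
    ((if |z| ≤ c then f z else 0) - if |z| ≤ 1 then f z else 0) =
      {z : ℝ | 1 < |z| ∧ |z| ≤ c}.indicator f z := by
  simp only [Set.indicator_apply, Set.mem_ofPred_eq]
  by_cases h1 : |z| ≤ 1
  · simp [h1, h1.trans hc]
  · simp [h1, lt_of_not_ge h1]

lemma ite_abs_le_sub_ite_abs_le_of_le_one {c : ℝ} (hc : c ≤ 1) (f : ℝ → ℝ) (z : ℝ) :
    ((if |z| ≤ c then f z else 0) - if |z| ≤ 1 then f z else 0) =
      -{z : ℝ | c < |z| ∧ |z| ≤ 1}.indicator f z := by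
  simp only [Set.indicator_apply, Set.mem_ofPred_eq]
  by_cases hzc : |z| ≤ c
  · simp [hzc, hzc.trans hc]
  · simp [hzc, lt_of_not_ge hzc]

lemma truncatedDrift_eq_of_abs_le_one (ν : Measure ℝ) (b : ℝ) {u : ℝ} (hu : 0 < |u|)
    (hu1 : |u| ≤ 1) :
    truncatedDrift ν b u = (b + ∫ z in {z : ℝ | 1 < |z| ∧ |z| ≤ |u|⁻¹}, z ∂ν) * u := by
  have hA : 1 ≤ |u|⁻¹ := (one_le_inv₀ hu).mpr hu1
  have hcut : ∀ z : ℝ, |z * u| ≤ 1 ↔ |z| ≤ |u|⁻¹ := fun z => by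
    rw [abs_mul, ← le_div_iff₀ hu, one_div]
  simp only [truncatedDrift, hcut]
  simp only [mul_comm _ u]
  rw [integral_congr_ae (.of_forall (ite_abs_le_sub_ite_abs_le_of_one_le hA (u * ·))),
    integral_indicator (measurableSet_abs_mem_Ioc _ _), integral_const_mul]
  ring

lemma truncatedDrift_eq_of_one_lt_abs (ν : Measure ℝ) (b : ℝ) {u : ℝ} (hu : 1 < |u|) :
    truncatedDrift ν b u = (b - ∫ z in {z : ℝ | |u|⁻¹ < |z| ∧ |z| ≤ 1}, z ∂ν) * u := by
  have hu0 : 0 < |u| := one_pos.trans hu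
  have ha : |u|⁻¹ ≤ 1 := inv_le_one_of_one_le₀ hu.le
  have hcut : ∀ z : ℝ, |z * u| ≤ 1 ↔ |z| ≤ |u|⁻¹ := fun z => by
    rw [abs_mul, ← le_div_iff₀ hu0, one_div]
  simp only [truncatedDrift, hcut]
  simp only [mul_comm _ u]
  rw [integral_congr_ae (.of_forall (ite_abs_le_sub_ite_abs_le_of_le_one ha (u * ·))),
    integral_neg, integral_indicator (measurableSet_abs_mem_Ioc _ _), integral_const_mul]
  ring

lemma abs_truncatedDrift_le (ν : Measure ℝ) (b : ℝ) {k K : ℝ → ℝ}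
    (hk : ∀ x, 0 ≤ k x) (hK : ∀ x, 0 ≤ K x) {C₁ C₂ : ℝ}
    (hbK : ∀ A : ℝ, 1 ≤ A → |b + ∫ z in {z : ℝ | 1 < |z| ∧ |z| ≤ A}, z ∂ν| ≤ C₁ * K A)
    (hbk : ∀ a : ℝ, a ∈ Set.Ioc (0 : ℝ) 1 →
      |b - ∫ z in {z : ℝ | a < |z| ∧ |z| ≤ 1}, z ∂ν| ≤ C₂ * k a) (u : ℝ) :
    |truncatedDrift ν b u| ≤ max C₁ C₂ * (|u| * driftWeight k K u) := by
  rcases eq_or_ne u 0 with rfl | hu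
  · simp [truncatedDrift]
  have hu0 : 0 < |u| := abs_pos.mpr hu
  rcases le_or_gt |u| 1 with hu1 | hu1
  · have hbound := hbK |u|⁻¹ ((one_le_inv₀ hu0).mpr hu1)
    have hC : C₁ * K |u|⁻¹ ≤ max C₁ C₂ * K |u|⁻¹ :=
      mul_le_mul_of_nonneg_right (le_max_left _ _) (hK _)
    simp only [truncatedDrift_eq_of_abs_le_one ν b hu0 hu1, driftWeight, abs_mul,
      if_neg hu1.not_gt, if_pos (And.intro hu0 hu1), zero_add]
    nlinarith
  · have hbound := hbk |u|⁻¹ ⟨inv_pos.mpr hu0, inv_le_one_of_one_le₀ hu1.le⟩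
    have hC : C₂ * k |u|⁻¹ ≤ max C₁ C₂ * k |u|⁻¹ :=
      mul_le_mul_of_nonneg_right (le_max_right _ _) (hk _)
    simp only [truncatedDrift_eq_of_one_lt_abs ν b hu1, driftWeight, abs_mul, if_pos hu1,
      if_neg (fun h : 0 < |u| ∧ |u| ≤ 1 => hu1.not_ge h.2), add_zero]
    nlinarith

lemma lintegral_ofReal_abs_lt_top_of_le_mul {α : Type*} [MeasurableSpace α] {μ : Measure α}
    {f h : α → ℝ} (C : ℝ) (hh : ∀ x, 0 ≤ h x) (hfh : ∀ x, |f x| ≤ C * h x)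
    (hint : ∫⁻ x, ENNReal.ofReal (h x) ∂μ < ⊤) :
    ∫⁻ x, ENNReal.ofReal |f x| ∂μ < ⊤ :=
  calc ∫⁻ x, ENNReal.ofReal |f x| ∂μ
      ≤ ∫⁻ x, ENNReal.ofReal C * ENNReal.ofReal (h x) ∂μ := lintegral_mono fun x => by
        rw [← ENNReal.ofReal_mul' (hh x)]
        exact ENNReal.ofReal_le_ofReal (hfh x)
    _ = ENNReal.ofReal C * ∫⁻ x, ENNReal.ofReal (h x) ∂μ :=
        lintegral_const_mul' _ _ ENNReal.ofReal_ne_top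
    _ < ⊤ := ENNReal.mul_lt_top ENNReal.ofReal_lt_top hint

theorem stmt9_general (d : ℕ)
    (S : Set (ℝ × (Fin d → ℝ)))
    (ν : Measure ℝ) (b : ℝ)
    (g : ℝ × (Fin d → ℝ) → ℝ)
    (k K : ℝ → ℝ)
    (hknn : ∀ x, 0 ≤ k x) (hKnn : ∀ x, 0 ≤ K x)
    (C₁ C₂ : ℝ)
    (hbK : ∀ A : ℝ, 1 ≤ A →
      |b + ∫ z in {z : ℝ | 1 < |z| ∧ |z| ≤ A}, z ∂ν| ≤ C₁ * K A)
    (hbk : ∀ a : ℝ, a ∈ Set.Ioc (0 : ℝ) 1 →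
      |b - ∫ z in {z : ℝ | a < |z| ∧ |z| ≤ 1}, z ∂ν| ≤ C₂ * k a)
    (hgint : (∫⁻ x in S, ENNReal.ofReal (|g x| *
        ((if 1 < |g x| then k (|g x|⁻¹) else 0) +
          (if 0 < |g x| ∧ |g x| ≤ 1 then K (|g x|⁻¹) else 0))) ∂volume) < ⊤) :
    (∫⁻ x in S, ENNReal.ofReal
        |b * g x + ∫ z, ((if |z * g x| ≤ 1 then z * g x else 0) -
          (if |z| ≤ 1 then g x * z else 0)) ∂ν| ∂volume) < ⊤ := by
  exact lintegral_ofReal_abs_lt_top_of_le_mul (f := fun x => truncatedDrift ν b (g x)) _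
    (fun x => mul_nonneg (abs_nonneg _) (driftWeight_nonneg hknn hKnn _))
    (fun x => abs_truncatedDrift_le ν b hknn hKnn hbK hbk (g x)) hgint

/-- a sufficient criterion for condition (1) of the Rajput–Rosinski
integrability criterion: if `|b + ∫_{1<|z|≤A} z ν(dz)| = O(K(A))`, `|b - ∫_{a<|z|≤1} z ν(dz)|
= O(k(a))` and `∫ |g| (k(|g|⁻¹) 1_{|g|>1} + K(|g|⁻¹) 1_{0<|g|≤1}) < ∞`, then
`∫ |b g + ∫ (z g 1_{|zg|≤1} - g z 1_{|z|≤1}) ν(dz)| d(t,x) < ∞`. -/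
theorem stmt9 (d : ℕ) (hd : 1 ≤ d)
    (S : Set (ℝ × (Fin d → ℝ))) (hS : S = Set.Ici (0 : ℝ) ×ˢ (Set.univ : Set (Fin d → ℝ)))
    (ν : Measure ℝ) (b : ℝ)
    (hν0 : ν ({0} : Set ℝ) = 0)
    (hν2 : (∫⁻ z, ENNReal.ofReal (min 1 (z ^ 2)) ∂ν) < ⊤)
    (g : ℝ × (Fin d → ℝ) → ℝ) (hgmeas : Measurable g)
    (k K : ℝ → ℝ) (hkmeas : Measurable k) (hKmeas : Measurable K)
    (hknn : ∀ x, 0 ≤ k x) (hKnn : ∀ x, 0 ≤ K x)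
    (C₁ C₂ : ℝ) (hC₁ : 0 ≤ C₁) (hC₂ : 0 ≤ C₂)
    (hbK : ∀ A : ℝ, 1 ≤ A →
      |b + ∫ z in {z : ℝ | 1 < |z| ∧ |z| ≤ A}, z ∂ν| ≤ C₁ * K A)
    (hbk : ∀ a : ℝ, a ∈ Set.Ioc (0 : ℝ) 1 →
      |b - ∫ z in {z : ℝ | a < |z| ∧ |z| ≤ 1}, z ∂ν| ≤ C₂ * k a)
    (hgint : (∫⁻ x in S, ENNReal.ofReal (|g x| *
        ((if 1 < |g x| then k (|g x|⁻¹) else 0) +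
          (if 0 < |g x| ∧ |g x| ≤ 1 then K (|g x|⁻¹) else 0))) ∂volume) < ⊤) :
    (∫⁻ x in S, ENNReal.ofReal
        |b * g x + ∫ z, ((if |z * g x| ≤ 1 then z * g x else 0) -
          (if |z| ≤ 1 then g x * z else 0)) ∂ν| ∂volume) < ⊤ :=
  stmt9_general d S ν b g k K hknn hKnn C₁ C₂ hbK hbk hgint
end

section
/- Let d ≥ 1, let ν be a Borel measure on ℝ with ν({0})=0 and ∫_ℝ (1 ∧ z²) ν(dz) < ∞, and let g: ℝ₊×ℝ^d → ℝ be measurable. Suppose there are an increasing function h: ℝ₊ → ℝ₊ with h(x) > 0 for x > 0 and a constant C ≥ 0 such that u² h(x) ≤ C h(u x) for all u ∈ [0,1] and x ∈ ℝ₊, and that ∫_{ℝ₊×ℝ^d} h(|g(t,x)|) d(t,x) < ∞ and ∫_ℝ h(|z|^{-1})^{-1} ν(dz) < ∞. Then ∫_{ℝ₊×ℝ^d} ∫_ℝ ( 1 ∧ |z g(t,x)|² ) ν(dz) d(t,x) < ∞. -/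
/-!
The integrand factorises up to a constant: for `z ≠ 0`,
`1 ∧ (z y)² ≤ C h(|y|) / h(|z|⁻¹)`. If `|z y| ≤ 1`, this is the scaling hypothesis with
`u = |z y|` and `x = |z|⁻¹`; otherwise `|z|⁻¹ < |y|`, and monotonicity of `h` together with
`C ≥ 1` (the scaling hypothesis at `u = 1`) gives it. At `z = 0` the integrand vanishes.
Integrating first in `z` and then in `(t, x)` bounds the double integral by `C ∫ h(|z|⁻¹)⁻¹ ν(dz) ∫ h(|g|)`.
-/

open MeasureTheory

section ScalingBound

variable {h : ℝ → ℝ} {C : ℝ}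

lemma one_le_of_sq_mul_le_mul (hpos : ∀ x : ℝ, 0 < x → 0 < h x)
    (hsub : ∀ u x : ℝ, u ∈ Set.Icc (0 : ℝ) 1 → 0 ≤ x → u ^ 2 * h x ≤ C * h (u * x)) :
    1 ≤ C := by
  have h1 := hsub 1 1 ⟨zero_le_one, le_rfl⟩ zero_le_one
  rw [one_pow, mul_one] at h1
  exact le_of_mul_le_mul_right h1 (hpos 1 one_pos)

lemma min_one_sq_mul_le_mul_inv (hmono : MonotoneOn h (Set.Ici (0 : ℝ)))
    (hpos : ∀ x : ℝ, 0 < x → 0 < h x)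
    (hsub : ∀ u x : ℝ, u ∈ Set.Icc (0 : ℝ) 1 → 0 ≤ x → u ^ 2 * h x ≤ C * h (u * x))
    {z : ℝ} (hz : z ≠ 0) (y : ℝ) :
    min 1 ((z * y) ^ 2) ≤ C * h |y| * (h |z|⁻¹)⁻¹ := by
  have hz_inv : 0 < |z|⁻¹ := inv_pos.mpr (abs_pos.mpr hz)
  rw [← div_eq_mul_inv, le_div_iff₀ (hpos _ hz_inv)]
  rcases le_or_gt |z * y| 1 with hle | hgt
  · have hscale := hsub |z * y| |z|⁻¹ ⟨abs_nonneg _, hle⟩ hz_inv.le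
    have hzy : |z * y| * |z|⁻¹ = |y| := by
      rw [abs_mul, mul_comm |z|, mul_assoc, mul_inv_cancel₀ (abs_pos.mpr hz).ne', mul_one]
    rw [hzy, sq_abs] at hscale
    exact (mul_le_mul_of_nonneg_right (min_le_right _ _) (hpos _ hz_inv).le).trans hscale
  · have hy : |z|⁻¹ < |y| := by
      rw [abs_mul] at hgt
      rwa [inv_lt_iff_one_lt_mul₀ (abs_pos.mpr hz), mul_comm]
    calc min 1 ((z * y) ^ 2) * h |z|⁻¹ ≤ 1 * h |y| :=
          mul_le_mul (min_le_left _ _) (hmono hz_inv.le (hz_inv.trans hy).le hy.le)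
            (hpos _ hz_inv).le zero_le_one
      _ ≤ C * h |y| :=
          mul_le_mul_of_nonneg_right (one_le_of_sq_mul_le_mul hpos hsub)
            (hpos _ (hz_inv.trans hy)).le

lemma ofReal_min_one_sq_mul_le (hmono : MonotoneOn h (Set.Ici (0 : ℝ)))
    (hpos : ∀ x : ℝ, 0 < x → 0 < h x)
    (hsub : ∀ u x : ℝ, u ∈ Set.Icc (0 : ℝ) 1 → 0 ≤ x → u ^ 2 * h x ≤ C * h (u * x))
    (z y : ℝ) :
    ENNReal.ofReal (min 1 ((z * y) ^ 2))
      ≤ ENNReal.ofReal C * ENNReal.ofReal (h |y|) * ENNReal.ofReal (h |z|⁻¹)⁻¹ := by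
  rcases eq_or_ne z 0 with rfl | hz
  · simp
  have hC : 0 ≤ C := zero_le_one.trans (one_le_of_sq_mul_le_mul hpos hsub)
  rw [← ENNReal.ofReal_mul hC,
    ← ENNReal.ofReal_mul' (inv_pos.mpr (hpos _ (inv_pos.mpr (abs_pos.mpr hz)))).le]
  exact ENNReal.ofReal_le_ofReal (min_one_sq_mul_le_mul_inv hmono hpos hsub hz y)

lemma lintegral_lintegral_min_one_sq_mul_le {α : Type*} [MeasurableSpace α] (μ : Measure α)
    (ν : Measure ℝ) (g : α → ℝ) (hmono : MonotoneOn h (Set.Ici (0 : ℝ)))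
    (hpos : ∀ x : ℝ, 0 < x → 0 < h x)
    (hsub : ∀ u x : ℝ, u ∈ Set.Icc (0 : ℝ) 1 → 0 ≤ x → u ^ 2 * h x ≤ C * h (u * x))
    (hν : ∫⁻ z, ENNReal.ofReal (h |z|⁻¹)⁻¹ ∂ν ≠ ⊤) :
    ∫⁻ x, ∫⁻ z, ENNReal.ofReal (min 1 ((z * g x) ^ 2)) ∂ν ∂μ
      ≤ ENNReal.ofReal C * (∫⁻ z, ENNReal.ofReal (h |z|⁻¹)⁻¹ ∂ν)
        * ∫⁻ x, ENNReal.ofReal (h |g x|) ∂μ := by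
  set I := ∫⁻ z, ENNReal.ofReal (h |z|⁻¹)⁻¹ ∂ν
  calc ∫⁻ x, ∫⁻ z, ENNReal.ofReal (min 1 ((z * g x) ^ 2)) ∂ν ∂μ
      ≤ ∫⁻ x, ENNReal.ofReal C * ENNReal.ofReal (h |g x|) * I ∂μ := by
        refine lintegral_mono fun x => ?_
        rw [← lintegral_const_mul' _ _ (by finiteness)]
        exact lintegral_mono fun z => ofReal_min_one_sq_mul_le hmono hpos hsub z (g x)
    _ = ∫⁻ x, (ENNReal.ofReal C * I) * ENNReal.ofReal (h |g x|) ∂μ := by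
        simp only [mul_right_comm _ _ I]
    _ = ENNReal.ofReal C * I * ∫⁻ x, ENNReal.ofReal (h |g x|) ∂μ :=
        lintegral_const_mul' _ _ (ENNReal.mul_ne_top ENNReal.ofReal_ne_top hν)

end ScalingBound

theorem stmt10_general (d : ℕ)
    (S : Set (ℝ × (Fin d → ℝ)))
    (ν : Measure ℝ)
    (g : ℝ × (Fin d → ℝ) → ℝ)
    (h : ℝ → ℝ) (hmono : MonotoneOn h (Set.Ici (0 : ℝ)))
    (hpos : ∀ x : ℝ, 0 < x → 0 < h x)
    (C : ℝ)
    (hsub : ∀ u x : ℝ, u ∈ Set.Icc (0 : ℝ) 1 → 0 ≤ x → u ^ 2 * h x ≤ C * h (u * x))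
    (hg : (∫⁻ x in S, ENNReal.ofReal (h |g x|) ∂volume) < ⊤)
    (hν : (∫⁻ z, ENNReal.ofReal (h |z|⁻¹)⁻¹ ∂ν) < ⊤) :
    (∫⁻ x in S, ∫⁻ z, ENNReal.ofReal (min 1 ((z * g x) ^ 2)) ∂ν ∂volume) < ⊤ :=
  (lintegral_lintegral_min_one_sq_mul_le _ ν g hmono hpos hsub hν.ne).trans_lt
    (ENNReal.mul_lt_top (ENNReal.mul_lt_top ENNReal.ofReal_lt_top hν) hg)

/-- a sufficient criterion for condition (3) of the Rajput–Rosinski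
integrability criterion: if `h` is increasing with `u² h(x) ≤ C h(ux)` for `u ∈ [0,1]`,
`∫ h(|g|) d(t,x) < ∞` and `∫ h(|z|⁻¹)⁻¹ ν(dz) < ∞`, then
`∫∫ (1 ∧ |z g(t,x)|²) ν(dz) d(t,x) < ∞`. -/
theorem stmt10 (d : ℕ) (hd : 1 ≤ d)
    (S : Set (ℝ × (Fin d → ℝ))) (hS : S = Set.Ici (0 : ℝ) ×ˢ (Set.univ : Set (Fin d → ℝ)))
    (ν : Measure ℝ)
    (hν0 : ν ({0} : Set ℝ) = 0)
    (hν2 : (∫⁻ z, ENNReal.ofReal (min 1 (z ^ 2)) ∂ν) < ⊤)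
    (g : ℝ × (Fin d → ℝ) → ℝ) (hgmeas : Measurable g)
    (h : ℝ → ℝ) (hhmeas : Measurable h) (hmono : MonotoneOn h (Set.Ici (0 : ℝ)))
    (hnn : ∀ x : ℝ, 0 ≤ x → 0 ≤ h x) (hpos : ∀ x : ℝ, 0 < x → 0 < h x)
    (C : ℝ) (hC : 0 ≤ C)
    (hsub : ∀ u x : ℝ, u ∈ Set.Icc (0 : ℝ) 1 → 0 ≤ x → u ^ 2 * h x ≤ C * h (u * x))
    (hg : (∫⁻ x in S, ENNReal.ofReal (h |g x|) ∂volume) < ⊤)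
    (hν : (∫⁻ z, ENNReal.ofReal (h |z|⁻¹)⁻¹ ∂ν) < ⊤) :
    (∫⁻ x in S, ∫⁻ z, ENNReal.ofReal (min 1 ((z * g x) ^ 2)) ∂ν ∂volume) < ⊤ :=
  stmt10_general d S ν g h hmono hpos C hsub hg hν
end

section
/- Let d ≥ 1, T > 0, let ρ be a signed Borel measure of finite total variation on ℝ₊×ℝ^d, and let g: ℝ₊×ℝ^d → ℝ be measurable (extended by zero to negative times). Assume: (i) there are u > 0 and constants C_T such that ∫₀^T∫_{ℝ^d} |g(s,y) − g(s+τ, y+ξ)|² d(s,y) ≤ C_T |(τ,ξ)|^u whenever |(τ,ξ)| is sufficiently small; (ii) there is p > 1 with ∫₀^T ( ∫_{ℝ^d} g(s,y)² dy )^p ds < ∞. Define (ρ*g)(t,x) := ∫₀^t∫_{ℝ^d} g(t−s,x−y) ρ(ds,dy). Then: (a) there is a constant C'_T such that for all sufficiently small |(τ,ξ)|, ∫₀^T∫_{ℝ^d} |(ρ*g)(s,y) − (ρ*g)(s+τ, y+ξ)|² d(s,y) ≤ C'_T ( |(τ,ξ)|^u + |(τ,ξ)|^{(p−1)/p} ); and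 (b) ∫₀^T ( ∫_{ℝ^d} (ρ*g)(s,y)² dy )^p ds < ∞. -/
/-!
Write `ν = |ρ|`. Cauchy–Schwarz against the finite measure `ν` gives
`|(ρ*f)(q)|² ≤ ν(univ) ∫ f(q - w)² ν(dw)`, so after Tonelli both estimates reduce to integrating
the translates `q ↦ f(q - w)²`, for `f = g` and for the increment `f = g - g(· + v)`, over the
window `[0,T] × ℝ^d`. Since `ρ` lives on nonnegative times, each translated window lies in
`((-∞,0) ∪ [0,T]) × ℝ^d`. For `f = g` the negative-time part vanishes, and Jensen's inequality in
`ν` gives (b). For the increment with `v = (τ,ξ)` the negative-time part equals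
`∫_{[0,τ)} ‖g(t,·)‖₂² dt`, which Hölder's inequality bounds by
`‖g‖_{L^p(0,T;L²)} τ^{(p-1)/p}`, and the rest is hypothesis (i). The identity
`ρ*g(q) - ρ*g(q + v) = ρ*(g - g(· + v))(q)` needs the convolution integrals to converge, which the
same bounds give for almost every `q`.
-/

open MeasureTheory Set
open scoped ENNReal

/-- The convolution `(ρ*g)(p) = ∫ g(p - q) ρ(dq)` of a function with a signed measure, via the
Jordan decomposition.  For `ρ` supported on `ℝ₊×ℝ^d` and `g` vanishing at negative times this
is `∫₀^t ∫_{ℝ^d} g(t-s, x-y) ρ(ds,dy)` at `p = (t,x)`. -/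
noncomputable def smConvFun {E : Type*} [MeasurableSpace E] [Sub E]
    (μ : MeasureTheory.SignedMeasure E) (h : E → ℝ) (p : E) : ℝ :=
  (∫ q, h (p - q) ∂μ.toJordanDecomposition.posPart) -
  (∫ q, h (p - q) ∂μ.toJordanDecomposition.negPart)

theorem ENNReal.ofReal_sq_eq_enorm_sq (x : ℝ) : ENNReal.ofReal (x ^ 2) = ‖x‖ₑ ^ 2 := by
  rw [← sq_abs, ENNReal.ofReal_pow (abs_nonneg x), Real.enorm_eq_ofReal_abs]

section Holder

variable {α : Type*} [MeasurableSpace α] {μ : Measure α}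

theorem lintegral_le_lintegral_rpow_mul_measure_univ {f : α → ℝ≥0∞} (hf : AEMeasurable f μ)
    {p : ℝ} (hp : 1 ≤ p) :
    ∫⁻ a, f a ∂μ ≤ (∫⁻ a, f a ^ p ∂μ) ^ (1 / p) * μ univ ^ ((p - 1) / p) := by
  have h := eLpNorm'_le_eLpNorm'_mul_rpow_measure_univ one_pos hp hf.aestronglyMeasurable
  rw [show 1 / 1 - 1 / p = (p - 1) / p by field_simp] at h
  simpa [eLpNorm', enorm_eq_self] using h

theorem lintegral_rpow_le_measure_univ_mul {f : α → ℝ≥0∞} (hf : AEMeasurable f μ) {p : ℝ}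
    (hp : 1 ≤ p) : (∫⁻ a, f a ∂μ) ^ p ≤ μ univ ^ (p - 1) * ∫⁻ a, f a ^ p ∂μ := by
  have hp0 : 0 < p := by linarith
  calc (∫⁻ a, f a ∂μ) ^ p
      ≤ ((∫⁻ a, f a ^ p ∂μ) ^ (1 / p) * μ univ ^ ((p - 1) / p)) ^ p :=
        ENNReal.rpow_le_rpow (lintegral_le_lintegral_rpow_mul_measure_univ hf hp) hp0.le
    _ = μ univ ^ (p - 1) * ∫⁻ a, f a ^ p ∂μ := by
        rw [ENNReal.mul_rpow_of_nonneg _ _ hp0.le, ← ENNReal.rpow_mul, ← ENNReal.rpow_mul,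
          one_div_mul_cancel hp0.ne', div_mul_cancel₀ _ hp0.ne', ENNReal.rpow_one, mul_comm]

theorem sq_lintegral_le_measure_univ_mul {f : α → ℝ≥0∞} (hf : AEMeasurable f μ) :
    (∫⁻ a, f a ∂μ) ^ 2 ≤ μ univ * ∫⁻ a, f a ^ 2 ∂μ := by
  have h := lintegral_rpow_le_measure_univ_mul hf (one_le_two : (1 : ℝ) ≤ 2)
  norm_num [ENNReal.rpow_two] at h
  exact h

theorem setLIntegral_ne_top_of_rpow {f : α → ℝ≥0∞} {s : Set α}
    (hf : AEMeasurable f (μ.restrict s)) {p : ℝ} (hp : 1 ≤ p) (hs : μ s ≠ ∞) (h : ∫⁻ a in s, f a ^ p ∂μ ≠ ∞) : ∫⁻ a in s, f a ∂μ ≠ ∞ := by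
  refine ne_top_of_le_ne_top ?_ (lintegral_le_lintegral_rpow_mul_measure_univ hf hp)
  rw [Measure.restrict_apply_univ]
  exact ENNReal.mul_ne_top (ENNReal.rpow_ne_top_of_nonneg (by positivity) h)
    (ENNReal.rpow_ne_top_of_nonneg (div_nonneg (by linarith) (by linarith)) hs)

theorem integrable_of_lintegral_ofReal_sq_lt_top [IsFiniteMeasure μ] {f : α → ℝ}
    (hf : AEStronglyMeasurable f μ) (h : ∫⁻ a, ENNReal.ofReal (f a ^ 2) ∂μ < ∞) :
    Integrable f μ :=
  ((memLp_two_iff_integrable_sq hf).2 ⟨hf.pow 2,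
    (hasFiniteIntegral_iff_ofReal (ae_of_all _ fun a => sq_nonneg (f a))).2 h⟩).integrable
    one_le_two

end Holder

namespace MeasureTheory.SignedMeasure

variable {α : Type*} [MeasurableSpace α] (ρ : SignedMeasure α)

theorem ofReal_sq_integral_posPart_sub_negPart_le {f : α → ℝ}
    (hf : AEMeasurable f ρ.totalVariation) :
    ENNReal.ofReal ((∫ a, f a ∂ρ.toJordanDecomposition.posPart -
        ∫ a, f a ∂ρ.toJordanDecomposition.negPart) ^ 2) ≤
      ρ.totalVariation univ * ∫⁻ a, ENNReal.ofReal (f a ^ 2) ∂ρ.totalVariation := by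
  have hnorm : ‖∫ a, f a ∂ρ.toJordanDecomposition.posPart -
      ∫ a, f a ∂ρ.toJordanDecomposition.negPart‖ₑ ≤ ∫⁻ a, ‖f a‖ₑ ∂ρ.totalVariation :=
    calc _ ≤ ‖∫ a, f a ∂ρ.toJordanDecomposition.posPart‖ₑ +
          ‖∫ a, f a ∂ρ.toJordanDecomposition.negPart‖ₑ := enorm_sub_le
      _ ≤ _ := add_le_add (enorm_integral_le_lintegral_enorm _)
          (enorm_integral_le_lintegral_enorm _)
      _ = _ := (lintegral_add_measure _ _ _).symm
  simp_rw [ENNReal.ofReal_sq_eq_enorm_sq]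
  exact (pow_le_pow_left' hnorm 2).trans (sq_lintegral_le_measure_univ_mul hf.enorm)

end MeasureTheory.SignedMeasure

section Convolution

variable {E : Type*} [MeasurableSpace E] (ρ : SignedMeasure E)

theorem smConvFun_sub [Sub E] {f h : E → ℝ} {q : E}
    (hf : Integrable (fun w => f (q - w)) ρ.totalVariation)
    (hh : Integrable (fun w => h (q - w)) ρ.totalVariation) :
    smConvFun ρ (f - h) q = smConvFun ρ f q - smConvFun ρ h q := by
  have hpos : ρ.toJordanDecomposition.posPart ≤ ρ.totalVariation := Measure.le_add_right le_rfl
  have hneg : ρ.toJordanDecomposition.negPart ≤ ρ.totalVariation := Measure.le_add_left le_rfl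
  simp only [smConvFun, Pi.sub_apply]
  rw [integral_sub (hf.mono_measure hpos) (hh.mono_measure hpos),
    integral_sub (hf.mono_measure hneg) (hh.mono_measure hneg)]
  ring

theorem smConvFun_add [AddCommGroup E] (h : E → ℝ) (q v : E) :
    smConvFun ρ h (q + v) = smConvFun ρ (fun r => h (r + v)) q := by
  simp only [smConvFun, add_sub_right_comm]

theorem ofReal_sq_smConvFun_le [Sub E] [MeasurableSub E] {h : E → ℝ} (hh : Measurable h)
    (q : E) :
    ENNReal.ofReal (smConvFun ρ h q ^ 2) ≤
      ρ.totalVariation univ * ∫⁻ w, ENNReal.ofReal (h (q - w) ^ 2) ∂ρ.totalVariation :=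
  ρ.ofReal_sq_integral_posPart_sub_negPart_le (hh.comp (measurable_const_sub q)).aemeasurable

end Convolution

section Translation

variable {X : Type*} [MeasurableSpace X] [AddGroup X] [MeasurableAdd X] (μ : Measure X)
  [μ.IsAddRightInvariant]

theorem setLIntegral_comp_sub_right (F : X → ℝ≥0∞) (S : Set X) (w : X) :
    ∫⁻ q in S, F (q - w) ∂μ = ∫⁻ q in (· + w) ⁻¹' S, F q ∂μ := by
  have h := (measurePreserving_add_right μ w).setLIntegral_comp_preimage_emb
    (MeasurableEquiv.addRight w).measurableEmbedding (fun q => F (q - w)) S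
  simpa only [MeasurableEquiv.coe_addRight, add_sub_cancel_right] using h.symm

theorem setLIntegral_comp_sub_right_le {F : X → ℝ≥0∞} {S A B : Set X} {w : X}
    (h : (· + w) ⁻¹' S ⊆ A ∪ B) :
    ∫⁻ q in S, F (q - w) ∂μ ≤ ∫⁻ q in A, F q ∂μ + ∫⁻ q in B, F q ∂μ := by
  rw [setLIntegral_comp_sub_right]
  exact (lintegral_mono_set h).trans (lintegral_union_le _ _ _)

variable [MeasurableSub₂ X] [SFinite μ] (ν : Measure X)

theorem setLIntegral_lintegral_comp_sub_le [SFinite ν] {F : X → ℝ≥0∞} (hF : Measurable F)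
    {S A : Set X} (hν : ∀ᵐ w ∂ν, (· + w) ⁻¹' S ⊆ A ∪ S) :
    ∫⁻ q in S, ∫⁻ w, F (q - w) ∂ν ∂μ ≤ ν univ * (∫⁻ q in A, F q ∂μ + ∫⁻ q in S, F q ∂μ) := by
  rw [lintegral_lintegral_swap (f := fun q w => F (q - w)) (hF.comp measurable_sub).aemeasurable]
  calc ∫⁻ w, ∫⁻ q in S, F (q - w) ∂μ ∂ν
      ≤ ∫⁻ _, (∫⁻ q in A, F q ∂μ + ∫⁻ q in S, F q ∂μ) ∂ν :=
        lintegral_mono_ae (hν.mono fun _ hw => setLIntegral_comp_sub_right_le μ hw)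
    _ = _ := by rw [lintegral_const, mul_comm]

theorem ae_integrable_comp_sub [IsFiniteMeasure ν] {f : X → ℝ} (hf : Measurable f)
    {S A : Set X} (hν : ∀ᵐ w ∂ν, (· + w) ⁻¹' S ⊆ A ∪ S)
    (hA : ∫⁻ q in A, ENNReal.ofReal (f q ^ 2) ∂μ ≠ ∞)
    (hS : ∫⁻ q in S, ENNReal.ofReal (f q ^ 2) ∂μ ≠ ∞) :
    ∀ᵐ q ∂μ.restrict S, Integrable (fun w => f (q - w)) ν := by
  have hF : Measurable fun q => ENNReal.ofReal (f q ^ 2) :=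
    ENNReal.measurable_ofReal.comp (hf.pow_const 2)
  have hfin := (setLIntegral_lintegral_comp_sub_le μ ν hF hν).trans_lt
    (ENNReal.mul_lt_top (measure_lt_top ν univ) (ENNReal.add_lt_top.2 ⟨hA.lt_top, hS.lt_top⟩))
  filter_upwards [ae_lt_top (hF.comp measurable_sub).lintegral_prod_right' hfin.ne] with q hq
  exact integrable_of_lintegral_ofReal_sq_lt_top
    (hf.comp (measurable_const_sub q)).aestronglyMeasurable hq

theorem ae_ofReal_sq_smConvFun_sub_le (ρ : SignedMeasure X) {f h : X → ℝ} (hf : Measurable f)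
    (hh : Measurable h) {S A : Set X}
    (hρ : ∀ᵐ w ∂ρ.totalVariation, (· + w) ⁻¹' S ⊆ A ∪ S)
    (hfA : ∫⁻ q in A, ENNReal.ofReal (f q ^ 2) ∂μ ≠ ∞)
    (hfS : ∫⁻ q in S, ENNReal.ofReal (f q ^ 2) ∂μ ≠ ∞)
    (hfhA : ∫⁻ q in A, ENNReal.ofReal ((f q - h q) ^ 2) ∂μ ≠ ∞)
    (hfhS : ∫⁻ q in S, ENNReal.ofReal ((f q - h q) ^ 2) ∂μ ≠ ∞) :
    ∀ᵐ q ∂μ.restrict S, ENNReal.ofReal ((smConvFun ρ f q - smConvFun ρ h q) ^ 2) ≤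
      ρ.totalVariation univ *
        ∫⁻ w, ENNReal.ofReal ((f (q - w) - h (q - w)) ^ 2) ∂ρ.totalVariation := by
  filter_upwards [ae_integrable_comp_sub μ _ hf hρ hfA hfS,
    ae_integrable_comp_sub μ _ (hf.sub hh) hρ hfhA hfhS] with q hfq hfhq
  have hlin := smConvFun_sub ρ hfq hfhq
  rw [sub_sub_cancel] at hlin
  rw [hlin, sub_sub_cancel]
  exact ofReal_sq_smConvFun_le ρ (hf.sub hh) q

end Translation

theorem preimage_add_const_Icc_subset {s : ℝ} (hs : 0 ≤ s) (T : ℝ) :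
    (· + s) ⁻¹' Icc 0 T ⊆ Iio 0 ∪ Icc 0 T := by
  intro t ⟨_, htT⟩
  rcases lt_or_ge t 0 with ht | ht
  · exact Or.inl ht
  · exact Or.inr ⟨ht, by linarith⟩

theorem preimage_add_Icc_prod_univ_subset {E : Type*} [Add E] {w : ℝ × E} (hw : 0 ≤ w.1)
    (T : ℝ) : (· + w) ⁻¹' (Icc 0 T ×ˢ univ) ⊆ Iio 0 ×ˢ univ ∪ Icc 0 T ×ˢ univ := by
  rintro q ⟨hq, -⟩
  rcases preimage_add_const_Icc_subset hw T hq with h | h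
  exacts [Or.inl ⟨h, trivial⟩, Or.inr ⟨h, trivial⟩]

-- `volume` on a product is only definitionally `volume.prod volume`, so the `Measure.prod`
-- instance is not found by unification.
instance {α β : Type*} [MeasureSpace α] [MeasureSpace β] [Add α] [Add β] [MeasurableAdd α]
    [MeasurableAdd β] [SFinite (volume : Measure α)] [SFinite (volume : Measure β)]
    [(volume : Measure α).IsAddRightInvariant] [(volume : Measure β).IsAddRightInvariant] :
    (volume : Measure (α × β)).IsAddRightInvariant :=
  Measure.prod.instIsAddRightInvariant (μ := (volume : Measure α)) (ν := (volume : Measure β))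

section SpatialNorm

variable {E : Type*} [MeasureSpace E]

noncomputable def spatialSqNorm (g : ℝ × E → ℝ) (t : ℝ) : ℝ≥0∞ :=
  ∫⁻ y, ENNReal.ofReal (g (t, y) ^ 2)

variable {g : ℝ × E → ℝ}

theorem measurable_spatialSqNorm [SFinite (volume : Measure E)] (hg : Measurable g) :
    Measurable (spatialSqNorm g) :=
  (ENNReal.measurable_ofReal.comp (hg.pow_const 2)).lintegral_prod_right'

theorem spatialSqNorm_of_neg (hg0 : ∀ q : ℝ × E, q.1 < 0 → g q = 0) {t : ℝ} (ht : t < 0) :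
    spatialSqNorm g t = 0 := by
  simp [spatialSqNorm, hg0 (t, _) ht]

theorem setLIntegral_prod_univ_sq [SFinite (volume : Measure E)] (hg : Measurable g) (A : Set ℝ) :
    ∫⁻ q in A ×ˢ univ, ENNReal.ofReal (g q ^ 2) = ∫⁻ t in A, spatialSqNorm g t := by
  rw [Measure.volume_eq_prod, setLIntegral_prod (fun q => ENNReal.ofReal (g q ^ 2))
    (ENNReal.measurable_ofReal.comp (hg.pow_const 2)).aemeasurable]
  simp only [Measure.restrict_univ, spatialSqNorm]

theorem setLIntegral_Iio_spatialSqNorm_le [SFinite (volume : Measure E)] (hg : Measurable g)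
    (hg0 : ∀ q : ℝ × E, q.1 < 0 → g q = 0) {p : ℝ} (hp : 1 ≤ p) {a T : ℝ} (haT : a ≤ T) :
    ∫⁻ t in Iio a, spatialSqNorm g t ≤
      (∫⁻ t in Icc 0 T, spatialSqNorm g t ^ p) ^ (1 / p) * ENNReal.ofReal a ^ ((p - 1) / p) := by
  have hsplit : Iio a ⊆ Iio 0 ∪ Ico 0 a := fun t ht => by
    rcases lt_or_ge t 0 with h | h
    exacts [Or.inl h, Or.inr ⟨h, ht⟩]
  have hzero : ∫⁻ t in Iio 0, spatialSqNorm g t = 0 :=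
    (setLIntegral_congr_fun measurableSet_Iio fun t ht => spatialSqNorm_of_neg hg0 ht).trans
      lintegral_zero
  calc ∫⁻ t in Iio a, spatialSqNorm g t
      ≤ ∫⁻ t in Ico 0 a, spatialSqNorm g t := by
        simpa [hzero] using (lintegral_mono_set (μ := volume) (f := spatialSqNorm g) hsplit).trans
          (lintegral_union_le _ _ _)
    _ ≤ (∫⁻ t in Ico 0 a, spatialSqNorm g t ^ p) ^ (1 / p) *
          volume (Ico (0 : ℝ) a) ^ ((p - 1) / p) := by
        simpa using lintegral_le_lintegral_rpow_mul_measure_univ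
          (measurable_spatialSqNorm hg).aemeasurable (μ := volume.restrict (Ico 0 a)) hp
    _ ≤ _ := by
        rw [Real.volume_Ico, sub_zero]
        gcongr
        exact Ico_subset_Icc_self.trans (Icc_subset_Icc_right haT)

end SpatialNorm

section SpaceTime

variable {E : Type*} [NormedAddCommGroup E] [MeasureSpace E] [BorelSpace E]
  [(volume : Measure E).IsAddRightInvariant] {g : ℝ × E → ℝ}

theorem lintegral_sq_comp_sub_eq_spatialSqNorm (g : ℝ × E → ℝ) (t : ℝ) (w : ℝ × E) :
    ∫⁻ y, ENNReal.ofReal (g ((t, y) - w) ^ 2) = spatialSqNorm g (t - w.1) :=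
  lintegral_sub_right_eq_self (fun y => ENNReal.ofReal (g (t - w.1, y) ^ 2)) w.2

theorem setLIntegral_Iio_prod_univ_comp_add [SFinite (volume : Measure E)] (F : ℝ × E → ℝ≥0∞)
    (v : ℝ × E) : ∫⁻ r in Iio 0 ×ˢ univ, F (r + v) = ∫⁻ q in Iio v.1 ×ˢ univ, F q := by
  have hpre : (· + -v) ⁻¹' (Iio 0 ×ˢ univ) = Iio v.1 ×ˢ (univ : Set E) := by
    ext q
    simp [← sub_eq_add_neg, sub_neg]
  simpa only [sub_neg_eq_add, hpre] using setLIntegral_comp_sub_right volume F (Iio 0 ×ˢ univ) (-v)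

variable [SecondCountableTopology E] [SFinite (volume : Measure E)]

theorem spatialSqNorm_smConvFun_le (ρ : SignedMeasure (ℝ × E)) (hg : Measurable g) (t : ℝ) :
    spatialSqNorm (smConvFun ρ g) t ≤
      ρ.totalVariation univ * ∫⁻ s, spatialSqNorm g (t - s) ∂ρ.totalVariation.map Prod.fst := by
  have hmeas : Measurable (Function.uncurry fun (y : E) (w : ℝ × E) =>
      ENNReal.ofReal (g ((t, y) - w) ^ 2)) :=
    ENNReal.measurable_ofReal.comp
      ((hg.comp ((measurable_const.prodMk measurable_fst).sub measurable_snd)).pow_const 2)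
  calc spatialSqNorm (smConvFun ρ g) t
      ≤ ∫⁻ y, ρ.totalVariation univ *
          ∫⁻ w, ENNReal.ofReal (g ((t, y) - w) ^ 2) ∂ρ.totalVariation :=
        lintegral_mono fun y => ofReal_sq_smConvFun_le ρ hg (t, y)
    _ = ρ.totalVariation univ *
          ∫⁻ w, (∫⁻ y, ENNReal.ofReal (g ((t, y) - w) ^ 2)) ∂ρ.totalVariation := by
        rw [lintegral_const_mul' _ _ (measure_ne_top _ _),
          lintegral_lintegral_swap (f := fun y w => ENNReal.ofReal (g ((t, y) - w) ^ 2))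
            hmeas.aemeasurable]
    _ = _ := by
        simp_rw [lintegral_sq_comp_sub_eq_spatialSqNorm]
        rw [lintegral_map (f := fun s => spatialSqNorm g (t - s))
          ((measurable_spatialSqNorm hg).comp (measurable_const_sub t)) measurable_fst]

theorem setLIntegral_spatialSqNorm_smConvFun_rpow_le (ρ : SignedMeasure (ℝ × E))
    (hρ : ∀ᵐ w ∂ρ.totalVariation, 0 ≤ w.1) (hg : Measurable g)
    (hg0 : ∀ q : ℝ × E, q.1 < 0 → g q = 0) {p : ℝ} (hp : 1 ≤ p) (T : ℝ) :
    ∫⁻ t in Icc 0 T, spatialSqNorm (smConvFun ρ g) t ^ p ≤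
      ρ.totalVariation univ ^ (2 * p) * ∫⁻ t in Icc 0 T, spatialSqNorm g t ^ p := by
  set ν := ρ.totalVariation.map Prod.fst
  set R := ρ.totalVariation univ
  have hνR : ν univ = R := by
    rw [Measure.map_apply measurable_fst MeasurableSet.univ, preimage_univ]
  have hG := measurable_spatialSqNorm hg
  have hwin : ∀ᵐ s ∂ν, (· + s) ⁻¹' Icc 0 T ⊆ Iio 0 ∪ Icc 0 T :=
    ((ae_map_iff measurable_fst.aemeasurable measurableSet_Ici).2 hρ).mono
      fun s hs => preimage_add_const_Icc_subset hs T
  have hzero : ∫⁻ t in Iio 0, spatialSqNorm g t ^ p = 0 := by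
    refine (setLIntegral_congr_fun measurableSet_Iio fun t ht => ?_).trans lintegral_zero
    rw [spatialSqNorm_of_neg hg0 ht, ENNReal.zero_rpow_of_pos (by linarith)]
  have hpow : R ^ p * R ^ (p - 1) * R = R ^ (2 * p) := by
    calc R ^ p * R ^ (p - 1) * R = R ^ (p + (p - 1) + 1) := by
          rw [ENNReal.rpow_add_of_nonneg _ _ (by linarith) zero_le_one,
            ENNReal.rpow_add_of_nonneg _ _ (by linarith) (by linarith), ENNReal.rpow_one]
      _ = R ^ (2 * p) := by ring_nf
  calc ∫⁻ t in Icc 0 T, spatialSqNorm (smConvFun ρ g) t ^ p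
      ≤ ∫⁻ t in Icc 0 T, R ^ p * (R ^ (p - 1) * ∫⁻ s, spatialSqNorm g (t - s) ^ p ∂ν) := by
        refine lintegral_mono fun t => ?_
        calc spatialSqNorm (smConvFun ρ g) t ^ p
            ≤ (R * ∫⁻ s, spatialSqNorm g (t - s) ∂ν) ^ p :=
              ENNReal.rpow_le_rpow (spatialSqNorm_smConvFun_le ρ hg t) (by linarith)
          _ = R ^ p * (∫⁻ s, spatialSqNorm g (t - s) ∂ν) ^ p :=
              ENNReal.mul_rpow_of_nonneg _ _ (by linarith)
          _ ≤ _ := by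
              rw [← hνR]
              gcongr
              exact lintegral_rpow_le_measure_univ_mul
                (hG.comp (measurable_const_sub t)).aemeasurable hp
    _ = R ^ p * R ^ (p - 1) * ∫⁻ t in Icc 0 T, ∫⁻ s, spatialSqNorm g (t - s) ^ p ∂ν := by
        rw [← lintegral_const_mul' _ _ (by finiteness)]
        simp_rw [mul_assoc]
    _ ≤ R ^ p * R ^ (p - 1) *
          (ν univ * ((∫⁻ t in Iio 0, spatialSqNorm g t ^ p) +
            ∫⁻ t in Icc 0 T, spatialSqNorm g t ^ p)) := by
        gcongr
        exact setLIntegral_lintegral_comp_sub_le volume ν (hG.pow_const p) hwin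
    _ = _ := by rw [hzero, zero_add, hνR, ← mul_assoc, hpow]

theorem setLIntegral_sq_smConvFun_sub_le (ρ : SignedMeasure (ℝ × E))
    (hρ : ∀ᵐ w ∂ρ.totalVariation, 0 ≤ w.1) (hg : Measurable g)
    (hg0 : ∀ q : ℝ × E, q.1 < 0 → g q = 0) {p : ℝ} (hp : 1 ≤ p) {T : ℝ}
    (hM : ∫⁻ t in Icc 0 T, spatialSqNorm g t ^ p ≠ ∞) {v : ℝ × E} (hvT : v.1 ≤ T)
    (hgv : ∫⁻ q in Icc 0 T ×ˢ univ, ENNReal.ofReal ((g q - g (q + v)) ^ 2) ≠ ∞) :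
    ∫⁻ q in Icc 0 T ×ˢ univ, ENNReal.ofReal ((smConvFun ρ g q - smConvFun ρ g (q + v)) ^ 2) ≤
      ρ.totalVariation univ ^ 2 *
        ((∫⁻ t in Icc 0 T, spatialSqNorm g t ^ p) ^ (1 / p) * ENNReal.ofReal v.1 ^ ((p - 1) / p) +
          ∫⁻ q in Icc 0 T ×ˢ univ, ENNReal.ofReal ((g q - g (q + v)) ^ 2)) := by
  set S : Set (ℝ × E) := Icc 0 T ×ˢ univ
  set N : Set (ℝ × E) := Iio 0 ×ˢ univ
  set R := ρ.totalVariation univ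
  have hN : MeasurableSet N := measurableSet_Iio.prod MeasurableSet.univ
  have hgv_meas : Measurable fun q => g (q + v) := hg.comp (measurable_add_const v)
  have hwin : ∀ᵐ w ∂ρ.totalVariation, (· + w) ⁻¹' S ⊆ N ∪ S :=
    hρ.mono fun w hw => preimage_add_Icc_prod_univ_subset hw T
  have hN0 : ∫⁻ q in N, ENNReal.ofReal (g q ^ 2) = 0 :=
    (setLIntegral_congr_fun hN fun q hq => by simp [hg0 q hq.1]).trans lintegral_zero
  have hNv : ∫⁻ q in N, ENNReal.ofReal ((g q - g (q + v)) ^ 2) ≤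
      (∫⁻ t in Icc 0 T, spatialSqNorm g t ^ p) ^ (1 / p) * ENNReal.ofReal v.1 ^ ((p - 1) / p) := by
    rw [setLIntegral_congr_fun (g := fun q => ENNReal.ofReal (g (q + v) ^ 2)) hN
        fun q hq => by simp [hg0 q hq.1],
      setLIntegral_Iio_prod_univ_comp_add (fun q => ENNReal.ofReal (g q ^ 2)),
      setLIntegral_prod_univ_sq hg]
    exact setLIntegral_Iio_spatialSqNorm_le hg hg0 hp hvT
  have hS : ∫⁻ q in S, ENNReal.ofReal (g q ^ 2) ≠ ∞ := by
    rw [setLIntegral_prod_univ_sq hg]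
    exact setLIntegral_ne_top_of_rpow (measurable_spatialSqNorm hg).aemeasurable hp
      (by simp [Real.volume_Icc]) hM
  have hψ : Measurable fun q => ENNReal.ofReal ((g q - g (q + v)) ^ 2) :=
    ENNReal.measurable_ofReal.comp ((hg.sub hgv_meas).pow_const 2)
  calc ∫⁻ q in S, ENNReal.ofReal ((smConvFun ρ g q - smConvFun ρ g (q + v)) ^ 2)
      ≤ ∫⁻ q in S, R * ∫⁻ w, ENNReal.ofReal ((g (q - w) - g (q - w + v)) ^ 2)
          ∂ρ.totalVariation := by
        refine lintegral_mono_ae ?_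
        simp_rw [smConvFun_add]
        exact ae_ofReal_sq_smConvFun_sub_le volume ρ hg hgv_meas hwin (by simp [hN0]) hS
          (ne_top_of_le_ne_top (by finiteness) hNv) hgv
    _ = R * ∫⁻ q in S, ∫⁻ w, ENNReal.ofReal ((g (q - w) - g (q - w + v)) ^ 2)
          ∂ρ.totalVariation := lintegral_const_mul' _ _ (measure_ne_top _ _)
    _ ≤ R * (R * ((∫⁻ q in N, ENNReal.ofReal ((g q - g (q + v)) ^ 2)) +
          ∫⁻ q in S, ENNReal.ofReal ((g q - g (q + v)) ^ 2))) := by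
        gcongr
        exact setLIntegral_lintegral_comp_sub_le volume _ hψ hwin
    _ ≤ _ := by
        rw [← mul_assoc, ← pow_two]
        gcongr

end SpaceTime

theorem ENNReal.sq_mul_add_ofReal_le {R K : ℝ≥0∞} (hR : R ≠ ∞) (hK : K ≠ ∞) (C : ℝ) {x y : ℝ}
    (hx : 0 ≤ x) (hy : 0 ≤ y) :
    R ^ 2 * (K * ENNReal.ofReal x + ENNReal.ofReal (C * y)) ≤
      ENNReal.ofReal (R.toReal ^ 2 * (K.toReal + |C|) * (y + x)) := by
  lift R to NNReal using hR
  lift K to NNReal using hK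
  have hK0 : (0 : ℝ) ≤ K := K.coe_nonneg
  calc (R : ℝ≥0∞) ^ 2 * (K * ENNReal.ofReal x + ENNReal.ofReal (C * y))
      ≤ ENNReal.ofReal ((R : ℝ) ^ 2) * (ENNReal.ofReal (K * x) + ENNReal.ofReal (|C| * y)) := by
        rw [ENNReal.ofReal_pow R.coe_nonneg, ENNReal.ofReal_mul hK0, ENNReal.ofReal_coe_nnreal,
          ENNReal.ofReal_coe_nnreal]
        gcongr
        exact le_abs_self C
    _ = ENNReal.ofReal ((R : ℝ) ^ 2 * (K * x + |C| * y)) := by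
        rw [← ENNReal.ofReal_add (by positivity) (by positivity),
          ← ENNReal.ofReal_mul (by positivity)]
    _ ≤ _ := by
        simp only [ENNReal.coe_toReal]
        refine ENNReal.ofReal_le_ofReal ?_
        nlinarith [mul_nonneg (sq_nonneg (R : ℝ))
          (add_nonneg (mul_nonneg hK0 hy) (mul_nonneg (abs_nonneg C) hx))]

theorem stmt13_general (d : ℕ) (T : ℝ) (hT : 0 < T)
    (ρ : SignedMeasure (ℝ × EuclideanSpace ℝ (Fin d)))
    (hρsupp : ρ.totalVariation
      (Set.Ici (0 : ℝ) ×ˢ (Set.univ : Set (EuclideanSpace ℝ (Fin d))))ᶜ = 0)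
    (g : ℝ × EuclideanSpace ℝ (Fin d) → ℝ) (hgmeas : Measurable g)
    (hg0 : ∀ p : ℝ × EuclideanSpace ℝ (Fin d), p.1 < 0 → g p = 0)
    (u : ℝ) (C : ℝ) (δ : ℝ) (hδ : 0 < δ)
    (hHolder : ∀ (τ : ℝ) (ξ : EuclideanSpace ℝ (Fin d)),
      Real.sqrt (τ ^ 2 + ‖ξ‖ ^ 2) ≤ δ →
      (∫⁻ p in Set.Icc (0 : ℝ) T ×ˢ (Set.univ : Set (EuclideanSpace ℝ (Fin d))),
          ENNReal.ofReal ((g p - g (p.1 + τ, p.2 + ξ)) ^ 2) ∂volume) ≤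
        ENNReal.ofReal (C * Real.sqrt (τ ^ 2 + ‖ξ‖ ^ 2) ^ u))
    (p : ℝ) (hp : 1 < p)
    (hInt : (∫⁻ t in Set.Icc (0 : ℝ) T,
        (∫⁻ y, ENNReal.ofReal ((g (t, y)) ^ 2) ∂volume) ^ p ∂volume) < ⊤) :
    (∃ C' : ℝ, ∃ δ' : ℝ, 0 < δ' ∧
      ∀ (τ : ℝ) (ξ : EuclideanSpace ℝ (Fin d)),
        Real.sqrt (τ ^ 2 + ‖ξ‖ ^ 2) ≤ δ' →
        (∫⁻ q in Set.Icc (0 : ℝ) T ×ˢ (Set.univ : Set (EuclideanSpace ℝ (Fin d))),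
            ENNReal.ofReal ((smConvFun ρ g q - smConvFun ρ g (q.1 + τ, q.2 + ξ)) ^ 2)
              ∂volume) ≤
          ENNReal.ofReal (C' * (Real.sqrt (τ ^ 2 + ‖ξ‖ ^ 2) ^ u +
            Real.sqrt (τ ^ 2 + ‖ξ‖ ^ 2) ^ ((p - 1) / p)))) ∧
    (∫⁻ t in Set.Icc (0 : ℝ) T,
        (∫⁻ y, ENNReal.ofReal ((smConvFun ρ g (t, y)) ^ 2) ∂volume) ^ p ∂volume) < ⊤ := by
  have hsupp : ∀ᵐ w ∂ρ.totalVariation, 0 ≤ w.1 :=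
    measure_mono_null (fun w hw => by simpa using hw) hρsupp
  refine ⟨?_, (setLIntegral_spatialSqNorm_smConvFun_rpow_le ρ hsupp hgmeas hg0 hp.le T).trans_lt
    (ENNReal.mul_lt_top (by finiteness) hInt)⟩
  set R := ρ.totalVariation univ
  set K := (∫⁻ t in Icc 0 T, spatialSqNorm g t ^ p) ^ (1 / p)
  refine ⟨R.toReal ^ 2 * (K.toReal + |C|), min δ T, lt_min hδ hT, fun τ ξ hθ => ?_⟩
  set θ := √(τ ^ 2 + ‖ξ‖ ^ 2)
  have hβ : 0 ≤ (p - 1) / p := div_nonneg (by linarith) (by linarith)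
  have hτθ : τ ≤ θ := (le_abs_self τ).trans (Real.abs_le_sqrt (le_add_of_nonneg_right (sq_nonneg _)))
  have hHold := hHolder τ ξ (hθ.trans (min_le_left _ _))
  calc _ ≤ R ^ 2 * (K * ENNReal.ofReal τ ^ ((p - 1) / p) + ENNReal.ofReal (C * θ ^ u)) :=
        (setLIntegral_sq_smConvFun_sub_le ρ hsupp hgmeas hg0 hp.le hInt.ne (v := (τ, ξ))
          (hτθ.trans (hθ.trans (min_le_right _ _)))
          (ne_top_of_le_ne_top ENNReal.ofReal_ne_top hHold)).trans (by gcongr; exact hHold)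
    _ ≤ R ^ 2 * (K * ENNReal.ofReal (θ ^ ((p - 1) / p)) + ENNReal.ofReal (C * θ ^ u)) := by
        rw [← ENNReal.ofReal_rpow_of_nonneg (Real.sqrt_nonneg _) hβ]
        gcongr
    _ ≤ _ := ENNReal.sq_mul_add_ofReal_le (by finiteness)
        (ENNReal.rpow_ne_top_of_nonneg (by positivity) hInt.ne) C (by positivity) (by positivity)

/-- if `g` satisfies the square-translation estimate (i) with exponent `u` and
the mixed-norm bound (ii) with exponent `p > 1` on `[0,T]×ℝ^d`, then so does `ρ*g`, with the
translation estimate weakened to `C'(|(τ,ξ)|^u + |(τ,ξ)|^{(p-1)/p})`. -/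
theorem stmt13 (d : ℕ) (hd : 1 ≤ d) (T : ℝ) (hT : 0 < T)
    (ρ : SignedMeasure (ℝ × EuclideanSpace ℝ (Fin d)))
    (hρsupp : ρ.totalVariation
      (Set.Ici (0 : ℝ) ×ˢ (Set.univ : Set (EuclideanSpace ℝ (Fin d))))ᶜ = 0)
    (g : ℝ × EuclideanSpace ℝ (Fin d) → ℝ) (hgmeas : Measurable g)
    (hg0 : ∀ p : ℝ × EuclideanSpace ℝ (Fin d), p.1 < 0 → g p = 0)
    (u : ℝ) (hu : 0 < u) (C : ℝ) (δ : ℝ) (hδ : 0 < δ)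
    (hHolder : ∀ (τ : ℝ) (ξ : EuclideanSpace ℝ (Fin d)),
      Real.sqrt (τ ^ 2 + ‖ξ‖ ^ 2) ≤ δ →
      (∫⁻ p in Set.Icc (0 : ℝ) T ×ˢ (Set.univ : Set (EuclideanSpace ℝ (Fin d))),
          ENNReal.ofReal ((g p - g (p.1 + τ, p.2 + ξ)) ^ 2) ∂volume) ≤
        ENNReal.ofReal (C * Real.sqrt (τ ^ 2 + ‖ξ‖ ^ 2) ^ u))
    (p : ℝ) (hp : 1 < p)
    (hInt : (∫⁻ t in Set.Icc (0 : ℝ) T,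
        (∫⁻ y, ENNReal.ofReal ((g (t, y)) ^ 2) ∂volume) ^ p ∂volume) < ⊤) :
    (∃ C' : ℝ, ∃ δ' : ℝ, 0 < δ' ∧
      ∀ (τ : ℝ) (ξ : EuclideanSpace ℝ (Fin d)),
        Real.sqrt (τ ^ 2 + ‖ξ‖ ^ 2) ≤ δ' →
        (∫⁻ q in Set.Icc (0 : ℝ) T ×ˢ (Set.univ : Set (EuclideanSpace ℝ (Fin d))),
            ENNReal.ofReal ((smConvFun ρ g q - smConvFun ρ g (q.1 + τ, q.2 + ξ)) ^ 2)
              ∂volume) ≤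
          ENNReal.ofReal (C' * (Real.sqrt (τ ^ 2 + ‖ξ‖ ^ 2) ^ u +
            Real.sqrt (τ ^ 2 + ‖ξ‖ ^ 2) ^ ((p - 1) / p)))) ∧
    (∫⁻ t in Set.Icc (0 : ℝ) T,
        (∫⁻ y, ENNReal.ofReal ((smConvFun ρ g (t, y)) ^ 2) ∂volume) ^ p ∂volume) < ⊤ :=
  stmt13_general d T hT ρ hρsupp g hgmeas hg0 u C δ hδ hHolder p hp hInt
end

section
/- Let λ, λ' > 0, τ ≥ 0 and ξ ∈ ℝ. Then ∫₀^∞ ∫_ℝ e^{−λs − λ'|y|} · e^{−λ(s+τ) − λ'|y+ξ|} dy ds = (e^{−λτ} / (2λ)) · e^{−λ'|ξ|} ( |ξ| + 1/λ' ). In particular ∫_ℝ e^{−λ'|y| − λ'|y+ξ|} dy = e^{−λ'|ξ|}(|ξ| + 1/λ'), so the normalized autocovariance (autocorrelation) in dimension d = 1 equals e^{−λτ}(λ'|ξ| + 1) e^{−λ'|ξ|}. -/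
/-!
The integrand factors as `e^{-λτ} e^{-2λs} · e^{-λ'(|y| + |y+ξ|)}`, so the double integral is
`e^{-λτ}/(2λ)` times the spatial integral. After the reflection `y ↦ -y` one may take `ξ ≥ 0`;
then `|y| + |y+ξ|` is `-2y - ξ` on `(-∞, -ξ]`, `ξ` on `(-ξ, 0]` and `2y + ξ` on `(0, ∞)`, and the
three pieces contribute `e^{-λ'ξ}/(2λ') + ξ e^{-λ'ξ} + e^{-λ'ξ}/(2λ')`.
-/

open MeasureTheory Real Set

theorem integral_eq_Iic_add_Ioc_add_Ioi {E : Type*} [NormedAddCommGroup E] [NormedSpace ℝ E]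
    {f : ℝ → E} {μ : Measure ℝ} {a b : ℝ} (hab : a ≤ b) (h_left : IntegrableOn f (Iic a) μ)
    (h_mid : IntegrableOn f (Ioc a b) μ) (h_right : IntegrableOn f (Ioi b) μ) :
    ∫ x, f x ∂μ = ∫ x in Iic a, f x ∂μ + ∫ x in Ioc a b, f x ∂μ + ∫ x in Ioi b, f x ∂μ := by
  have h_union : Ioc a b ∪ Ioi b = Ioi a := Ioc_union_Ioi_eq_Ioi hab
  rw [add_assoc, ← setIntegral_union (Ioc_disjoint_Ioi le_rfl) measurableSet_Ioi h_mid h_right,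
    h_union, intervalIntegral.integral_Iic_add_Ioi h_left (h_union ▸ h_mid.union h_right)]

theorem integral_exp_neg_mul_abs_sub_mul_abs_add_of_nonneg {a ξ : ℝ} (ha : 0 < a) (hξ : 0 ≤ ξ) :
    ∫ y, exp (-(a * |y|) - a * |y + ξ|) = exp (-(a * ξ)) * (ξ + 1 / a) := by
  set f : ℝ → ℝ := fun y ↦ exp (-(a * |y|) - a * |y + ξ|)
  have h_left : EqOn f (fun y ↦ exp (a * ξ) * exp (2 * a * y)) (Iic (-ξ)) := by
    intro y (hy : y ≤ -ξ)
    simp only [f, abs_of_nonpos (by linarith : y ≤ 0), abs_of_nonpos (by linarith : y + ξ ≤ 0),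
      ← exp_add]
    ring_nf
  have h_mid : EqOn f (fun _ ↦ exp (-(a * ξ))) (Ioc (-ξ) 0) := by
    rintro y ⟨hy₁, hy₂⟩
    simp only [f, abs_of_nonpos hy₂, abs_of_nonneg (by linarith : 0 ≤ y + ξ)]
    ring_nf
  have h_right : EqOn f (fun y ↦ exp (-(a * ξ)) * exp (-(2 * a) * y)) (Ioi 0) := by
    intro y (hy : 0 < y)
    simp only [f, abs_of_pos hy, abs_of_nonneg (by linarith : 0 ≤ y + ξ), ← exp_add]
    ring_nf
  have h2a : 0 < 2 * a := by linarith
  rw [integral_eq_Iic_add_Ioc_add_Ioi (neg_nonpos.2 hξ)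
      (IntegrableOn.congr_fun ((integrableOn_exp_mul_Iic h2a _).const_mul _) h_left.symm
        measurableSet_Iic)
      ((integrableOn_const measure_Ioc_lt_top.ne).congr_fun h_mid.symm measurableSet_Ioc)
      (IntegrableOn.congr_fun ((integrableOn_exp_mul_Ioi (neg_neg_of_pos h2a) _).const_mul _)
        h_right.symm measurableSet_Ioi),
    setIntegral_congr_fun measurableSet_Iic h_left, setIntegral_congr_fun measurableSet_Ioc h_mid,
    setIntegral_congr_fun measurableSet_Ioi h_right, integral_const_mul, integral_const_mul,
    integral_exp_mul_Iic h2a, integral_exp_mul_Ioi (neg_neg_of_pos h2a), setIntegral_const,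
    measureReal_def, volume_Ioc, ENNReal.toReal_ofReal (by linarith), smul_eq_mul]
  have h_corner : exp (a * ξ) * exp (2 * a * -ξ) = exp (-(a * ξ)) := by rw [← exp_add]; ring_nf
  rw [mul_div_assoc', h_corner, mul_zero, exp_zero]
  field_simp
  ring

theorem integral_exp_neg_mul_abs_sub_mul_abs_add {a : ℝ} (ha : 0 < a) (ξ : ℝ) :
    ∫ y, exp (-(a * |y|) - a * |y + ξ|) = exp (-(a * |ξ|)) * (|ξ| + 1 / a) := by
  rcases le_total 0 ξ with hξ | hξ
  · rw [abs_of_nonneg hξ, integral_exp_neg_mul_abs_sub_mul_abs_add_of_nonneg ha hξ]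
  · rw [abs_of_nonpos hξ,
      ← integral_exp_neg_mul_abs_sub_mul_abs_add_of_nonneg ha (neg_nonneg.2 hξ),
      ← integral_neg_eq_self]
    congr 1 with y
    rw [abs_neg, neg_add_eq_sub, abs_sub_comm, ← sub_eq_add_neg]

theorem integral_Ioi_integral_exp_mul_exp {lam lam' : ℝ} (hlam : 0 < lam) (hlam' : 0 < lam')
    (τ ξ : ℝ) :
    ∫ s in Ioi (0 : ℝ), ∫ y, exp (-(lam * s) - lam' * |y|) *
        exp (-(lam * (s + τ)) - lam' * |y + ξ|) =
      exp (-(lam * τ)) / (2 * lam) * exp (-(lam' * |ξ|)) * (|ξ| + 1 / lam') := by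
  have h_factor : ∀ s y : ℝ,
      exp (-(lam * s) - lam' * |y|) * exp (-(lam * (s + τ)) - lam' * |y + ξ|) =
        exp (-(lam * τ)) * exp (-(2 * lam) * s) * exp (-(lam' * |y|) - lam' * |y + ξ|) := by
    intro s y
    rw [← exp_add, ← exp_add, ← exp_add]
    ring_nf
  simp_rw [h_factor, integral_const_mul, integral_exp_neg_mul_abs_sub_mul_abs_add hlam',
    integral_mul_const, integral_const_mul, integral_exp_mul_Ioi (by linarith : -(2 * lam) < 0),
    mul_zero, exp_zero]
  field_simp

theorem stmt17_general (lam lam' : ℝ) (hlam : 0 < lam) (hlam' : 0 < lam')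
    (τ : ℝ) (ξ : ℝ) :
    (∫ s in Set.Ioi (0 : ℝ),
        ∫ y : ℝ, Real.exp (-(lam * s) - lam' * |y|) *
          Real.exp (-(lam * (s + τ)) - lam' * |y + ξ|) ∂volume) =
      Real.exp (-(lam * τ)) / (2 * lam) * Real.exp (-(lam' * |ξ|)) * (|ξ| + 1 / lam') ∧
    (∫ y : ℝ, Real.exp (-(lam' * |y|) - lam' * |y + ξ|) ∂volume) =
      Real.exp (-(lam' * |ξ|)) * (|ξ| + 1 / lam') ∧
    (Real.exp (-(lam * τ)) / (2 * lam) * Real.exp (-(lam' * |ξ|)) * (|ξ| + 1 / lam')) /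
        (Real.exp (-(lam * 0)) / (2 * lam) * Real.exp (-(lam' * |(0 : ℝ)|)) *
          (|(0 : ℝ)| + 1 / lam')) =
      Real.exp (-(lam * τ)) * (lam' * |ξ| + 1) * Real.exp (-(lam' * |ξ|)) := by
  refine ⟨integral_Ioi_integral_exp_mul_exp hlam hlam' τ ξ,
    integral_exp_neg_mul_abs_sub_mul_abs_add hlam' ξ, ?_⟩
  simp only [mul_zero, neg_zero, exp_zero, abs_zero, zero_add]
  field_simp

/-- for `λ, λ' > 0`, `τ ≥ 0` and `ξ ∈ ℝ`:
`∫₀^∞ ∫_ℝ e^{-λs-λ'|y|} e^{-λ(s+τ)-λ'|y+ξ|} dy ds = (e^{-λτ}/(2λ)) e^{-λ'|ξ|}(|ξ| + 1/λ')`;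
in particular `∫_ℝ e^{-λ'|y|-λ'|y+ξ|} dy = e^{-λ'|ξ|}(|ξ| + 1/λ')`, and the normalized
autocovariance equals `e^{-λτ}(λ'|ξ| + 1)e^{-λ'|ξ|}`. -/
theorem stmt17 (lam lam' : ℝ) (hlam : 0 < lam) (hlam' : 0 < lam')
    (τ : ℝ) (hτ : 0 ≤ τ) (ξ : ℝ) :
    (∫ s in Set.Ioi (0 : ℝ),
        ∫ y : ℝ, Real.exp (-(lam * s) - lam' * |y|) *
          Real.exp (-(lam * (s + τ)) - lam' * |y + ξ|) ∂volume) =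
      Real.exp (-(lam * τ)) / (2 * lam) * Real.exp (-(lam' * |ξ|)) * (|ξ| + 1 / lam') ∧
    (∫ y : ℝ, Real.exp (-(lam' * |y|) - lam' * |y + ξ|) ∂volume) =
      Real.exp (-(lam' * |ξ|)) * (|ξ| + 1 / lam') ∧
    (Real.exp (-(lam * τ)) / (2 * lam) * Real.exp (-(lam' * |ξ|)) * (|ξ| + 1 / lam')) /
        (Real.exp (-(lam * 0)) / (2 * lam) * Real.exp (-(lam' * |(0 : ℝ)|)) *
          (|(0 : ℝ)| + 1 / lam')) =
      Real.exp (-(lam * τ)) * (lam' * |ξ| + 1) * Real.exp (-(lam' * |ξ|)) :=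
  stmt17_general lam lam' hlam hlam' τ ξ
end

section
/- Let d ≥ 1, λ ∈ ℝ and f ∈ L¹(ℝ^d). Define k(t,x) := −λ f(x) on ℝ₊×ℝ^d, let f^{*1} := f and f^{*(n+1)} := f * f^{*n} (convolution on ℝ^d), and set r(t,x) := λ ∑_{n=1}^∞ ((−λt)^{n−1}/(n−1)!) f^{*n}(x). Then: (a) for every T > 0 the series converges absolutely in L¹([0,T]×ℝ^d) (indeed ∑_{n≥1} (|λ|T)^{n}/(n−1)! ‖f‖_{L¹}^{n} < ∞ dominates it) and for almost every (t,x) ∈ ℝ₊×ℝ^d the series converges absolutely; (b) r is a density of the resolvent of the measure k(t,x) d(t,x), i.e. for almost every (t,x) ∈ ℝ₊×ℝ^d: r(t,x) + k(t,x) = ∫₀^t ∫_{ℝ^d} k(t−s, x−y) r(s,y) dy ds. -/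
open MeasureTheory

/-- Spatial convolution powers: `convPow f n = f^{*(n+1)}`, i.e. `convPow f 0 = f` and
`convPow f (n+1) = f * convPow f n` (convolution on `ℝ^d`). -/
noncomputable def convPow {d : ℕ} (f : (Fin d → ℝ) → ℝ) : ℕ → (Fin d → ℝ) → ℝ
  | 0 => f
  | (n + 1) => fun x => ∫ y, f (x - y) * convPow f n y ∂volume

/-- The candidate resolvent density
`r(t,x) = λ ∑_{n=1}^∞ ((-λt)^{n-1}/(n-1)!) f^{*n}(x) = λ ∑_{m=0}^∞ ((-λt)^m/m!) f^{*(m+1)}(x)`. -/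
noncomputable def resolventSeries {d : ℕ} (lam : ℝ) (f : (Fin d → ℝ) → ℝ)
    (q : ℝ × (Fin d → ℝ)) : ℝ :=
  lam * ∑' m : ℕ, ((-(lam * q.1)) ^ m / (Nat.factorial m : ℝ)) * convPow f m q.2

open scoped ENNReal Nat

/-!
Since `∫⁻ ‖convPow f m‖ₑ ≤ ‖f‖₁ ^ (m + 1)`, the series `∑ c^m/m! ‖convPow f m x‖` and
`∑ c^m/m! (‖convPow f m‖ ⋆ ‖f‖)(x)` have integrals bounded by exponential series, so for a.e. `x`
both are finite for every integer `c`. At such an `x` and any `t` with `|λt| ≤ c` these bounds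
justify exchanging the series defining `r` with the `y`-integral (Fubini–Tonelli) and with the
`s`-integral (dominated convergence), and the resolvent identity reduces termwise to
`-λ ∫₀ᵗ (-λs)^m/m! ds = (-λt)^(m+1)/(m+1)!`, the index shift of the exponential series.
-/

theorem MeasureTheory.lintegral_lconvolution {G : Type*} [MeasurableSpace G] [AddGroup G]
    [MeasurableAdd₂ G] [MeasurableNeg G] {μ : Measure G} [μ.IsAddLeftInvariant] [SFinite μ]
    {f g : G → ℝ≥0∞} (hf : Measurable f) (hg : Measurable g) :
    ∫⁻ x, (f ⋆ₗ[μ] g) x ∂μ = (∫⁻ x, f x ∂μ) * ∫⁻ x, g x ∂μ := by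
  simp only [lconvolution_def]
  rw [lintegral_lintegral_swap (by fun_prop), ← lintegral_mul_const _ hf]
  congr 1 with y
  rw [lintegral_const_mul _ (by fun_prop), lintegral_add_left_eq_self]

theorem abs_pow_div_factorial_le {a c : ℝ} (hac : |a| ≤ c) (m : ℕ) :
    |a ^ m / m !| ≤ c ^ m / m ! := by
  rw [abs_div, abs_pow, Nat.abs_cast]
  gcongr

theorem enorm_pow_div_factorial_le {a c : ℝ} (hac : |a| ≤ c) (m : ℕ) :
    ‖a ^ m / m !‖ₑ ≤ ENNReal.ofReal (c ^ m / m !) := by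
  rw [Real.enorm_eq_ofReal_abs]
  exact ENNReal.ofReal_le_ofReal (abs_pow_div_factorial_le hac m)

theorem enorm_pow_div_factorial_mul_le {a c : ℝ} (hac : |a| ≤ c) (m : ℕ) (v : ℝ) :
    ‖a ^ m / m ! * v‖ₑ ≤ ENNReal.ofReal (c ^ m / m !) * ‖v‖ₑ := by
  rw [enorm_mul]
  gcongr
  exact enorm_pow_div_factorial_le hac m

theorem tsum_enorm_pow_div_factorial_mul_ne_top {a c : ℝ} (hac : |a| ≤ c) {v : ℕ → ℝ}
    (hv : ∑' m, ENNReal.ofReal (c ^ m / m !) * ‖v m‖ₑ ≠ ⊤) :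
    ∑' m, ‖a ^ m / m ! * v m‖ₑ ≠ ⊤ :=
  ne_top_of_le_ne_top hv <| ENNReal.tsum_le_tsum fun m => enorm_pow_div_factorial_mul_le hac m (v m)

theorem tsum_ofReal_pow_div_factorial_mul_pow_ne_top (c : ℝ) {A : ℝ≥0∞} (hA : A ≠ ⊤) (k : ℕ) :
    ∑' m, ENNReal.ofReal (c ^ m / m !) * A ^ (m + k) ≠ ⊤ := by
  lift A to NNReal using hA
  have hsum : Summable fun m => (A : ℝ) ^ k * ((c * A) ^ m / m !) :=
    (Real.summable_pow_div_factorial _).mul_left _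
  convert hsum.tsum_ofReal_ne_top using 3 with m
  rw [← ENNReal.ofReal_coe_nnreal, ← ENNReal.ofReal_pow A.coe_nonneg,
    ← ENNReal.ofReal_mul' (by positivity), mul_pow, pow_add]
  ring_nf

theorem ae_tsum_ofReal_pow_div_factorial_mul_ne_top {α : Type*} [MeasurableSpace α]
    {μ : Measure α} {F : ℕ → α → ℝ≥0∞} (hF : ∀ m, AEMeasurable (F m) μ) {A : ℝ≥0∞}
    (hA : A ≠ ⊤) {k : ℕ} (hFA : ∀ m, ∫⁻ x, F m x ∂μ ≤ A ^ (m + k)) (c : ℝ) :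
    ∀ᵐ x ∂μ, ∑' m, ENNReal.ofReal (c ^ m / m !) * F m x ≠ ⊤ := by
  have hmeas : ∀ m, AEMeasurable (fun x => ENNReal.ofReal (c ^ m / m !) * F m x) μ :=
    fun m => (hF m).const_mul _
  refine (ae_lt_top' (AEMeasurable.tsum hmeas) ?_).mono fun _ hx => hx.ne
  rw [lintegral_tsum hmeas]
  refine ne_top_of_le_ne_top (tsum_ofReal_pow_div_factorial_mul_pow_ne_top c hA k)
    (ENNReal.tsum_le_tsum fun m => ?_)
  rw [lintegral_const_mul'' _ (hF m)]
  gcongr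
  exact hFA m

theorem abs_mul_le_of_mem_uIcc {lam s t : ℝ} (hs : s ∈ Set.uIcc 0 t) : |lam * s| ≤ |lam * t| := by
  rw [abs_mul, abs_mul]
  exact mul_le_mul_of_nonneg_left (by simpa using Set.abs_sub_left_of_mem_uIcc hs)
    (abs_nonneg lam)

theorem neg_mul_integral_pow_div_factorial (lam t : ℝ) (m : ℕ) :
    -lam * ∫ s in (0 : ℝ)..t, (-(lam * s)) ^ m / m ! = (-(lam * t)) ^ (m + 1) / (m + 1)! := by
  simp only [neg_mul_eq_neg_mul, mul_pow, intervalIntegral.integral_div,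
    intervalIntegral.integral_const_mul, integral_pow]
  push_cast [Nat.factorial_succ]
  field_simp
  ring

theorem neg_mul_integral_tsum_pow_div_factorial_mul {lam t c : ℝ} (hc : |lam * t| ≤ c)
    {v : ℕ → ℝ} (hv : ∑' m, ENNReal.ofReal (c ^ m / m !) * ‖v m‖ₑ ≠ ⊤) :
    -lam * ∫ s in (0 : ℝ)..t, ∑' m, (-(lam * s)) ^ m / m ! * v m
      = ∑' m, (-(lam * t)) ^ (m + 1) / (m + 1)! * v m := by
  have hcoeff : ∀ s ∈ Set.uIoc 0 t, |-(lam * s)| ≤ c := fun s hs => by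
    rw [abs_neg]
    exact (abs_mul_le_of_mem_uIcc (Set.uIoc_subset_uIcc hs)).trans hc
  have hsum := intervalIntegral.hasSum_integral_of_dominated_convergence (μ := volume)
    (F := fun m s => (-(lam * s)) ^ m / m ! * v m)
    (fun m _ => (ENNReal.ofReal (c ^ m / m !) * ‖v m‖ₑ).toReal)
    (fun m => by fun_prop)
    (fun m => ae_of_all _ fun s hs => by
      rw [← toReal_enorm]
      exact ENNReal.toReal_mono (ENNReal.ne_top_of_tsum_ne_top hv m)
        (enorm_pow_div_factorial_mul_le (hcoeff s hs) m (v m)))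
    (ae_of_all _ fun _ _ => ENNReal.summable_toReal hv) intervalIntegrable_const
    (ae_of_all _ fun s hs =>
      (Summable.of_enorm (tsum_enorm_pow_div_factorial_mul_ne_top (hcoeff s hs) hv)).hasSum)
  rw [← hsum.tsum_eq, ← tsum_mul_left]
  congr 1 with m
  rw [intervalIntegral.integral_mul_const, ← mul_assoc, neg_mul_integral_pow_div_factorial]

theorem integral_Icc_abs_mul_pow_div_factorial_le (lam : ℝ) {T : ℝ} (hT : 0 ≤ T) (m : ℕ) :
    ∫ t in Set.Icc 0 T, |lam * ((-(lam * t)) ^ m / m !)|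
      ≤ |lam| * ((|lam| * T) ^ m / m !) * T := by
  have hbound : ∀ t ∈ Set.Icc 0 T,
      ‖|lam * ((-(lam * t)) ^ m / m !)|‖ ≤ |lam| * ((|lam| * T) ^ m / m !) := by
    intro t ht
    rw [Real.norm_eq_abs, abs_abs, abs_mul]
    gcongr
    refine abs_pow_div_factorial_le ?_ m
    rw [abs_neg, abs_mul, abs_of_nonneg ht.1]
    gcongr
    exact ht.2
  have := norm_setIntegral_le_of_norm_le_const (μ := volume) measure_Icc_lt_top hbound
  rw [Real.norm_eq_abs, Real.volume_real_Icc_of_le hT, sub_zero] at this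
  exact (le_abs_self _).trans this

section ConvolutionPowers

variable {d : ℕ} {f : (Fin d → ℝ) → ℝ}

theorem measurable_convPow (hf : Measurable f) : ∀ m, Measurable (convPow f m)
  | 0 => hf
  | m + 1 =>
    (((hf.comp (measurable_fst.sub measurable_snd)).mul
      ((measurable_convPow hf m).comp measurable_snd)).stronglyMeasurable
      |>.integral_prod_right').measurable

theorem lintegral_enorm_convPow_integrand (m : ℕ) (x : Fin d → ℝ) :
    ∫⁻ y, ‖f (x - y) * convPow f m y‖ₑ = ((‖convPow f m ·‖ₑ) ⋆ₗ (‖f ·‖ₑ)) x := by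
  simp only [lconvolution_def, enorm_mul, neg_add_eq_sub, mul_comm]

theorem enorm_convPow_succ_le (m : ℕ) (x : Fin d → ℝ) :
    ‖convPow f (m + 1) x‖ₑ ≤ ((‖convPow f m ·‖ₑ) ⋆ₗ (‖f ·‖ₑ)) x :=
  (enorm_integral_le_lintegral_enorm _).trans_eq (lintegral_enorm_convPow_integrand m x)

theorem lintegral_enorm_convPow_le (hf : Measurable f) :
    ∀ m, ∫⁻ x, ‖convPow f m x‖ₑ ≤ (∫⁻ x, ‖f x‖ₑ) ^ (m + 1)
  | 0 => (pow_one _).ge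
  | m + 1 => calc
      ∫⁻ x, ‖convPow f (m + 1) x‖ₑ ≤ ∫⁻ x, ((‖convPow f m ·‖ₑ) ⋆ₗ (‖f ·‖ₑ)) x :=
        lintegral_mono (enorm_convPow_succ_le m)
      _ = (∫⁻ x, ‖convPow f m x‖ₑ) * ∫⁻ x, ‖f x‖ₑ :=
        lintegral_lconvolution (measurable_convPow hf m).enorm hf.enorm
      _ ≤ (∫⁻ x, ‖f x‖ₑ) ^ (m + 1) * ∫⁻ x, ‖f x‖ₑ := by
        gcongr; exact lintegral_enorm_convPow_le hf m
      _ = (∫⁻ x, ‖f x‖ₑ) ^ (m + 1 + 1) := (pow_succ _ _).symm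

theorem lintegral_lconvolution_convPow_le (hf : Measurable f) (m : ℕ) :
    ∫⁻ x, ((‖convPow f m ·‖ₑ) ⋆ₗ (‖f ·‖ₑ)) x ≤ (∫⁻ x, ‖f x‖ₑ) ^ (m + 2) := by
  rw [lintegral_lconvolution (measurable_convPow hf m).enorm hf.enorm, pow_succ]
  gcongr
  exact lintegral_enorm_convPow_le hf m

theorem integral_abs_convPow_le (hf : Measurable f) (hfi : Integrable f) (m : ℕ) :
    ∫ x, |convPow f m x| ≤ (∫ x, |f x|) ^ (m + 1) := by
  simp only [← Real.norm_eq_abs]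
  rw [integral_norm_eq_lintegral_enorm (measurable_convPow hf m).aestronglyMeasurable,
    integral_norm_eq_lintegral_enorm hf.aestronglyMeasurable, ← ENNReal.toReal_pow]
  exact ENNReal.toReal_mono (ENNReal.pow_ne_top hfi.2.ne) (lintegral_enorm_convPow_le hf m)

theorem integral_kernel_mul_resolventSeries (hf : Measurable f) {lam s c : ℝ} {x : Fin d → ℝ}
    (hs : |lam * s| ≤ c)
    (hx : ∑' m, ENNReal.ofReal (c ^ m / m !) * ((‖convPow f m ·‖ₑ) ⋆ₗ (‖f ·‖ₑ)) x ≠ ⊤) :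
    ∫ y, (-lam * f (x - y)) * resolventSeries lam f (s, y)
      = lam * (-lam * ∑' m, (-(lam * s)) ^ m / m ! * convPow f (m + 1) x) := by
  have hs' : |-(lam * s)| ≤ c := by rwa [abs_neg]
  have hintegrand : ∀ y, (-lam * f (x - y)) * resolventSeries lam f (s, y)
      = lam * (-lam * ∑' m, (-(lam * s)) ^ m / m ! * (f (x - y) * convPow f m y)) := by
    intro y
    have hpull : ∑' m, (-(lam * s)) ^ m / m ! * (f (x - y) * convPow f m y)
        = f (x - y) * ∑' m, (-(lam * s)) ^ m / m ! * convPow f m y := by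
      rw [← tsum_mul_left]
      congr 1 with m
      ring
    rw [resolventSeries, hpull]
    ring
  simp only [hintegrand, integral_const_mul]
  rw [integral_tsum fun m => by have := measurable_convPow hf m; fun_prop]
  · simp only [integral_const_mul]
    rfl
  · refine ne_top_of_le_ne_top hx (ENNReal.tsum_le_tsum fun m => ?_)
    simp only [enorm_mul (a := (-(lam * s)) ^ m / m !)]
    rw [lintegral_const_mul' _ _ enorm_ne_top, lintegral_enorm_convPow_integrand]
    gcongr
    exact enorm_pow_div_factorial_le hs' m

theorem resolventSeries_add_neg_mul {lam t : ℝ} {x : Fin d → ℝ}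
    (hsum : Summable fun m => (-(lam * t)) ^ m / m ! * convPow f m x) :
    resolventSeries lam f (t, x) + -lam * f x
      = lam * ∑' m, (-(lam * t)) ^ (m + 1) / (m + 1)! * convPow f (m + 1) x := by
  rw [resolventSeries, hsum.tsum_eq_zero_add]
  simp only [pow_zero, Nat.factorial_zero, Nat.cast_one, div_one, one_mul, convPow]
  ring

theorem summable_abs_resolventSeries_term {lam t c : ℝ} {x : Fin d → ℝ} (hc : |lam * t| ≤ c)
    (hx : ∑' m, ENNReal.ofReal (c ^ m / m !) * ‖convPow f m x‖ₑ ≠ ⊤) :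
    Summable fun m => |lam * ((-(lam * t)) ^ m / m !) * convPow f m x| := by
  have := (tsum_enorm_ne_top_iff_summable_norm.mp
    (tsum_enorm_pow_div_factorial_mul_ne_top (by rwa [abs_neg]) hx)).mul_left |lam|
  simpa only [Real.norm_eq_abs, mul_assoc, abs_mul] using this

theorem resolventSeries_add_kernel_eq_integral (hf : Measurable f) {lam t c : ℝ}
    {x : Fin d → ℝ} (hc : |lam * t| ≤ c)
    (hx : ∑' m, ENNReal.ofReal (c ^ m / m !) * ‖convPow f m x‖ₑ ≠ ⊤)
    (hx' : ∑' m, ENNReal.ofReal (c ^ m / m !) * ((‖convPow f m ·‖ₑ) ⋆ₗ (‖f ·‖ₑ)) x ≠ ⊤) :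
    resolventSeries lam f (t, x) + (-lam * f x)
      = ∫ s in (0 : ℝ)..t, ∫ y, (-lam * f (x - y)) * resolventSeries lam f (s, y) := by
  have hsucc : ∑' m, ENNReal.ofReal (c ^ m / m !) * ‖convPow f (m + 1) x‖ₑ ≠ ⊤ :=
    ne_top_of_le_ne_top hx' <| ENNReal.tsum_le_tsum fun m => by
      gcongr
      exact enorm_convPow_succ_le m x
  rw [intervalIntegral.integral_congr fun s hs =>
      integral_kernel_mul_resolventSeries hf ((abs_mul_le_of_mem_uIcc hs).trans hc) hx',
    intervalIntegral.integral_const_mul, intervalIntegral.integral_const_mul,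
    neg_mul_integral_tsum_pow_div_factorial_mul hc hsucc,
    resolventSeries_add_neg_mul
      (Summable.of_enorm (tsum_enorm_pow_div_factorial_mul_ne_top (by rwa [abs_neg]) hx))]

theorem summable_integral_abs_resolventSeries_term (hf : Measurable f) (hfi : Integrable f) (lam : ℝ)
    {T : ℝ} (hT : 0 ≤ T) :
    Summable fun m : ℕ => ∫ q in Set.Icc (0 : ℝ) T ×ˢ (Set.univ : Set (Fin d → ℝ)),
      |lam * ((-(lam * q.1)) ^ m / m !) * convPow f m q.2| := by
  set a := ∫ x, |f x|
  have hbound : ∀ m : ℕ, ∫ q in Set.Icc (0 : ℝ) T ×ˢ (Set.univ : Set (Fin d → ℝ)),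
      |lam * ((-(lam * q.1)) ^ m / m !) * convPow f m q.2|
        ≤ |lam| * T * a * ((|lam| * T * a) ^ m / m !) := by
    intro m
    rw [Measure.volume_eq_prod, ← Measure.prod_restrict, Measure.restrict_univ]
    simp only [abs_mul (lam * _)]
    rw [integral_prod_mul (fun t => |lam * ((-(lam * t)) ^ m / m !)|)
      (fun x => |convPow f m x|)]
    calc _ ≤ |lam| * ((|lam| * T) ^ m / m !) * T * a ^ (m + 1) :=
          mul_le_mul (integral_Icc_abs_mul_pow_div_factorial_le lam hT m)
            (integral_abs_convPow_le hf hfi m) (integral_nonneg fun _ => abs_nonneg _)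
            (by positivity)
      _ = _ := by ring
  exact Summable.of_nonneg_of_le (fun m => integral_nonneg fun _ => abs_nonneg _) hbound
    ((Real.summable_pow_div_factorial _).mul_left _)

end ConvolutionPowers

theorem stmt18_general (d : ℕ) (lam : ℝ)
    (f : (Fin d → ℝ) → ℝ) (hfmeas : Measurable f) (hf : Integrable f volume) :
    (∀ T : ℝ, 0 < T →
      Summable (fun m : ℕ =>
        ∫ q in Set.Icc (0 : ℝ) T ×ˢ (Set.univ : Set (Fin d → ℝ)),
          |lam * ((-(lam * q.1)) ^ m / (Nat.factorial m : ℝ)) * convPow f m q.2| ∂volume)) ∧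
    (∀ᵐ q ∂(volume.restrict (Set.Ici (0 : ℝ) ×ˢ (Set.univ : Set (Fin d → ℝ)))),
      Summable (fun m : ℕ =>
        |lam * ((-(lam * q.1)) ^ m / (Nat.factorial m : ℝ)) * convPow f m q.2|)) ∧
    (∀ᵐ q ∂(volume.restrict (Set.Ici (0 : ℝ) ×ˢ (Set.univ : Set (Fin d → ℝ)))),
      resolventSeries lam f q + (-lam * f q.2) =
        ∫ s in (0 : ℝ)..q.1,
          ∫ y, (-lam * f (q.2 - y)) * resolventSeries lam f (s, y) ∂volume) := by
  have hA : ∫⁻ x, ‖f x‖ₑ ≠ ⊤ := hf.2.ne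
  have hgood : ∀ᵐ x : Fin d → ℝ, ∀ n : ℕ,
      ∑' m, ENNReal.ofReal ((n : ℝ) ^ m / m !) * ‖convPow f m x‖ₑ ≠ ⊤ ∧
      ∑' m, ENNReal.ofReal ((n : ℝ) ^ m / m !) * ((‖convPow f m ·‖ₑ) ⋆ₗ (‖f ·‖ₑ)) x ≠ ⊤ :=
    ae_all_iff.2 fun n =>
      (ae_tsum_ofReal_pow_div_factorial_mul_ne_top
        (fun m => (measurable_convPow hfmeas m).enorm.aemeasurable) hA
        (lintegral_enorm_convPow_le hfmeas) n).and
      (ae_tsum_ofReal_pow_div_factorial_mul_ne_top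
        (fun m => (measurable_lconvolution _ (measurable_convPow hfmeas m).enorm
          hfmeas.enorm).aemeasurable) hA
        (lintegral_lconvolution_convPow_le hfmeas) n)
  have hpointwise : ∀ᵐ q : ℝ × (Fin d → ℝ),
      Summable (fun m : ℕ => |lam * ((-(lam * q.1)) ^ m / m !) * convPow f m q.2|) ∧
      resolventSeries lam f q + (-lam * f q.2) =
        ∫ s in (0 : ℝ)..q.1, ∫ y, (-lam * f (q.2 - y)) * resolventSeries lam f (s, y) := by
    rw [Measure.volume_eq_prod]
    filter_upwards [Measure.quasiMeasurePreserving_snd.ae hgood] with ⟨t, x⟩ hx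
    obtain ⟨n, hn⟩ := exists_nat_ge |lam * t|
    exact ⟨summable_abs_resolventSeries_term hn (hx n).1,
      resolventSeries_add_kernel_eq_integral hfmeas hn (hx n).1 (hx n).2⟩
  exact ⟨fun T hT => summable_integral_abs_resolventSeries_term hfmeas hf lam hT.le,
    ae_restrict_of_ae (hpointwise.mono fun _ hq => hq.1),
    ae_restrict_of_ae (hpointwise.mono fun _ hq => hq.2)⟩

/-- for `f ∈ L¹(ℝ^d)` and `k(t,x) = -λ f(x)`:
(a) the series for `r` converges absolutely in `L¹([0,T]×ℝ^d)` for every `T > 0` and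
converges absolutely at almost every point of `ℝ₊×ℝ^d`;
(b) `r` is a resolvent density of `k`, i.e. `r + k = k*r` a.e. on `ℝ₊×ℝ^d`. -/
theorem stmt18 (d : ℕ) (hd : 1 ≤ d) (lam : ℝ)
    (f : (Fin d → ℝ) → ℝ) (hfmeas : Measurable f) (hf : Integrable f volume) :
    (∀ T : ℝ, 0 < T →
      Summable (fun m : ℕ =>
        ∫ q in Set.Icc (0 : ℝ) T ×ˢ (Set.univ : Set (Fin d → ℝ)),
          |lam * ((-(lam * q.1)) ^ m / (Nat.factorial m : ℝ)) * convPow f m q.2| ∂volume)) ∧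
    (∀ᵐ q ∂(volume.restrict (Set.Ici (0 : ℝ) ×ˢ (Set.univ : Set (Fin d → ℝ)))),
      Summable (fun m : ℕ =>
        |lam * ((-(lam * q.1)) ^ m / (Nat.factorial m : ℝ)) * convPow f m q.2|)) ∧
    (∀ᵐ q ∂(volume.restrict (Set.Ici (0 : ℝ) ×ˢ (Set.univ : Set (Fin d → ℝ)))),
      resolventSeries lam f q + (-lam * f q.2) =
        ∫ s in (0 : ℝ)..q.1,
          ∫ y, (-lam * f (q.2 - y)) * resolventSeries lam f (s, y) ∂volume) :=
  stmt18_general d lam f hfmeas hf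
end
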